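/- arXiv:1605.01068 — 8 statements merged into one kernel-verified Lean document; each statement's English description precedes it below -/
import Mathlib

section
/- Let d ≥ 2 and let f_d(n) denote the number of permutations π ∈ S_n all of whose cycle lengths are divisible by d. Then for n ≥ d, f_d(n) = (n-1)(n-2)⋯(n-d+2)·(n-d+1)²·f_d(n-d). -/
/-- `fd d n` is the number of permutations of `n` points all of whose cycle
lengths (including fixed points, which are cycles of length 1) are divisible
by `d`.  The cycle length of the cycle containing `x` is the minimal period
of `x` under the permutation. -/
noncomputable def fd (d n : ℕ) : ℕ :=
  Nat.card {π : Equiv.Perm (Fin n) // ∀ x, d ∣ Function.minimalPeriod (⇑π) x}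

/-!
Mark the point `0` of `Fin (n + 1)` and let `fdRooted d n r` count the permutations whose cycle
through `0` has length `≡ r (mod d)` while all other cycles have length divisible by `d`.
Either `0` is a fixed point (only possible for `r = 1`, and what remains is counted by `fd d n`),
or deleting `0` from its cycle leaves a permutation of `n` points whose cycle through the old
image of `0` has length `≡ r - 1`; that count does not depend on the marked point, so
`fdRooted d n r = [r = 1] fd d n + n * fdRooted d (n - 1) (r - 1)`.
As `fd d (n + 1) = fdRooted d n 0`, iterating `d - 1` times through the residues
`0, -1, …, -(d - 2)` (none equal to `1`) reaches `r = 1`, where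
`fdRooted d m 1 = (m + 1) * fd d m`.
-/

open Equiv Equiv.Perm Function

variable {α β : Type*}

theorem minimalPeriod_eq_of_iterate_apply {fa : α → α} {fb : β → β} {g : α → β}
    (hg : Injective g) {x : α} (h : ∀ k, fb^[k] (g x) = g (fa^[k] x)) :
    minimalPeriod fb (g x) = minimalPeriod fa x :=
  minimalPeriod_eq_minimalPeriod_iff.2 fun k => by
    rw [IsPeriodicPt, IsFixedPt, IsPeriodicPt, IsFixedPt, h, hg.eq_iff]

namespace Equiv.Perm

theorem minimalPeriod_pos [Finite α] (π : Perm α) (x : α) : 0 < minimalPeriod π x :=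
  minimalPeriod_pos_of_mem_periodicPts (π.injective.mem_periodicPts x)

theorem SameCycle.minimalPeriod_eq [Finite α] {π : Perm α} {x y : α} (h : π.SameCycle x y) :
    minimalPeriod π y = minimalPeriod π x := by
  obtain ⟨i, rfl⟩ := h.exists_nat_pow_eq
  rw [coe_pow]
  exact minimalPeriod_apply_iterate (π.injective.mem_periodicPts x) i

theorem minimalPeriod_conj_apply (σ π : Perm α) (x : α) :
    minimalPeriod (σ * π * σ⁻¹) (σ x) = minimalPeriod π x :=
  minimalPeriod_eq_of_iterate_apply σ.injective fun k => by
    rw [← coe_pow, ← coe_pow, conj_pow]; simp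

end Equiv.Perm

def DvdCyclesExcept (d : ℕ) (a : α) (r : ZMod d) (π : Perm α) : Prop :=
  (minimalPeriod π a : ZMod d) = r ∧ ∀ x, ¬ π.SameCycle a x → d ∣ minimalPeriod π x

theorem dvdCyclesExcept_zero_iff [Finite α] {d : ℕ} {a : α} {π : Perm α} :
    DvdCyclesExcept d a 0 π ↔ ∀ x, d ∣ minimalPeriod π x := by
  rw [DvdCyclesExcept, ZMod.natCast_eq_zero_iff]
  refine ⟨fun ⟨ha, hx⟩ x => ?_, fun h => ⟨h a, fun x _ => h x⟩⟩
  by_cases hax : π.SameCycle a x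
  · rwa [hax.minimalPeriod_eq]
  · exact hx x hax

theorem DvdCyclesExcept.conj {d : ℕ} {a : α} {r : ZMod d} {π : Perm α} (σ : Perm α)
    (h : DvdCyclesExcept d a r π) : DvdCyclesExcept d (σ a) r (σ * π * σ⁻¹) := by
  refine ⟨by rw [minimalPeriod_conj_apply]; exact h.1, fun y hy => ?_⟩
  obtain ⟨x, rfl⟩ := σ.surjective y
  rw [minimalPeriod_conj_apply]
  exact h.2 x fun hax => hy hax.conj

theorem card_dvdCyclesExcept_eq [Finite α] (d : ℕ) (r : ZMod d) (a b : α) :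
    Nat.card {π : Perm α // DvdCyclesExcept d a r π} =
      Nat.card {π : Perm α // DvdCyclesExcept d b r π} := by
  classical
  refine Nat.card_congr (subtypeEquiv (MulAut.conj (Equiv.swap a b)).toEquiv fun π => ?_)
  refine ⟨fun h => by simpa using h.conj (Equiv.swap a b), fun h => ?_⟩
  simpa [mul_assoc] using h.conj (Equiv.swap a b)

namespace Equiv.Perm

variable {n : ℕ} (e : Perm (Fin n))

theorem decomposeFin_symm_zero_apply_succ (x : Fin n) :
    decomposeFin.symm (0, e) x.succ = (e x).succ := by
  rw [decomposeFin_symm_apply_succ, swap_self, refl_apply]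

theorem minimalPeriod_decomposeFin_symm_zero_zero :
    minimalPeriod (decomposeFin.symm (0, e)) 0 = 1 :=
  minimalPeriod_eq_one_iff_isFixedPt.2 (decomposeFin_symm_apply_zero 0 e)

theorem minimalPeriod_decomposeFin_symm_zero_succ (x : Fin n) :
    minimalPeriod (decomposeFin.symm (0, e)) x.succ = minimalPeriod e x :=
  minimalPeriod_eq_of_iterate_apply (Fin.succ_injective n) fun k =>
    (Semiconj.iterate_right (fun x => (decomposeFin_symm_zero_apply_succ e x).symm) k x).symm

theorem sameCycle_decomposeFin_symm_zero_zero_iff {y : Fin (n + 1)} :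
    (decomposeFin.symm (0, e)).SameCycle 0 y ↔ y = 0 :=
  ⟨fun h => (h.eq_of_left (decomposeFin_symm_apply_zero 0 e)).symm, fun h => h ▸ .refl _ _⟩

-- `decomposeFin.symm (q.succ, e)` is `e` on `1, …, n` with `0` inserted in front of `q.succ`.
variable (q : Fin n)

theorem decomposeFin_symm_succ_apply_succ (x : Fin n) :
    decomposeFin.symm (q.succ, e) x.succ = if e x = q then 0 else (e x).succ := by
  rw [decomposeFin_symm_apply_succ]
  split_ifs with h
  · rw [h, swap_apply_right]
  · exact swap_apply_of_ne_of_ne (Fin.succ_ne_zero _) (by simpa using h)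

theorem iterate_decomposeFin_symm_succ_apply_succ {x : Fin n} (hx : ¬ e.SameCycle q x) (k : ℕ) :
    (decomposeFin.symm (q.succ, e))^[k] x.succ = (e^[k] x).succ := by
  induction k with
  | zero => rfl
  | succ k ih =>
    rw [iterate_succ_apply', ih, decomposeFin_symm_succ_apply_succ, if_neg,
      iterate_succ_apply']
    intro hq
    exact hx (SameCycle.symm
      ⟨(k + 1 : ℕ), by rw [zpow_natCast, coe_pow, iterate_succ_apply', hq]⟩)

theorem minimalPeriod_decomposeFin_symm_succ_succ {x : Fin n} (hx : ¬ e.SameCycle q x) :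
    minimalPeriod (decomposeFin.symm (q.succ, e)) x.succ = minimalPeriod e x :=
  minimalPeriod_eq_of_iterate_apply (Fin.succ_injective n)
    (iterate_decomposeFin_symm_succ_apply_succ e q hx)

theorem iterate_decomposeFin_symm_succ_apply_zero {j : ℕ} (hj : j < minimalPeriod e q) :
    (decomposeFin.symm (q.succ, e))^[j + 1] 0 = (e^[j] q).succ := by
  induction j with
  | zero => exact decomposeFin_symm_apply_zero _ e
  | succ j ih =>
    rw [iterate_succ_apply', ih (by omega), decomposeFin_symm_succ_apply_succ, if_neg,
      iterate_succ_apply']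
    exact fun hq => not_isPeriodicPt_of_pos_of_lt_minimalPeriod j.succ_ne_zero hj
      (by rwa [IsPeriodicPt, IsFixedPt, iterate_succ_apply'])

theorem minimalPeriod_decomposeFin_symm_succ_zero :
    minimalPeriod (decomposeFin.symm (q.succ, e)) 0 = minimalPeriod e q + 1 := by
  set σ := decomposeFin.symm (q.succ, e)
  obtain ⟨m, hm⟩ := Nat.exists_eq_add_one.2 (e.minimalPeriod_pos q)
  have hσm : σ^[m + 1] 0 = (e^[m] q).succ :=
    iterate_decomposeFin_symm_succ_apply_zero e q (by omega)
  have hperiodic : IsPeriodicPt σ (m + 1 + 1) 0 := by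
    rw [IsPeriodicPt, IsFixedPt, iterate_succ_apply', hσm, decomposeFin_symm_succ_apply_succ,
      if_pos (by rw [← iterate_succ_apply' e, Nat.succ_eq_add_one, ← hm,
        iterate_minimalPeriod])]
  refine hm ▸ le_antisymm (hperiodic.minimalPeriod_le (by omega)) (Nat.succ_le_of_lt ?_)
  by_contra! hle
  obtain ⟨j, hj⟩ := Nat.exists_eq_add_one.2 (σ.minimalPeriod_pos 0)
  have := iterate_decomposeFin_symm_succ_apply_zero e q (j := j) (by omega)
  rw [← hj, iterate_minimalPeriod] at this
  exact Fin.succ_ne_zero _ this.symm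

theorem sameCycle_decomposeFin_symm_succ_zero_succ_iff (x : Fin n) :
    (decomposeFin.symm (q.succ, e)).SameCycle 0 x.succ ↔ e.SameCycle q x := by
  refine ⟨fun h => ?_, fun h => ?_⟩
  · by_contra hx
    obtain ⟨k, hk⟩ := h.symm.exists_nat_pow_eq
    rw [coe_pow, iterate_decomposeFin_symm_succ_apply_succ e q hx] at hk
    exact Fin.succ_ne_zero _ hk
  · obtain ⟨k, rfl⟩ := h.exists_nat_pow_eq
    refine ⟨(k % minimalPeriod e q + 1 : ℕ), ?_⟩
    rw [zpow_natCast, coe_pow, coe_pow, iterate_decomposeFin_symm_succ_apply_zero e q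
      (Nat.mod_lt _ (e.minimalPeriod_pos q)), iterate_mod_minimalPeriod_eq]

theorem card_subtype_fin_succ (R : Perm (Fin (n + 1)) → Prop) :
    Nat.card {π // R π} =
      ∑ p : Fin (n + 1), Nat.card {e : Perm (Fin n) // R (decomposeFin.symm (p, e))} := by
  rw [← Nat.card_sigma]
  exact Nat.card_congr ((decomposeFin.subtypeEquiv fun π => by simp).trans
    (subtypeProdEquivSigmaSubtype fun p e => R (decomposeFin.symm (p, e))))

end Equiv.Perm

section

variable {d n : ℕ} (r : ZMod d) (e : Perm (Fin n))

theorem dvdCyclesExcept_decomposeFin_symm_zero_iff :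
    DvdCyclesExcept d 0 r (decomposeFin.symm (0, e)) ↔
      r = 1 ∧ ∀ x, d ∣ minimalPeriod e x := by
  rw [DvdCyclesExcept, minimalPeriod_decomposeFin_symm_zero_zero, Nat.cast_one, eq_comm,
    Fin.forall_fin_succ]
  simp only [sameCycle_decomposeFin_symm_zero_zero_iff, Fin.succ_ne_zero,
    minimalPeriod_decomposeFin_symm_zero_succ, not_true_eq_false, not_false_eq_true,
    false_imp_iff, forall_const, true_and]

theorem dvdCyclesExcept_decomposeFin_symm_succ_iff (q : Fin n) :
    DvdCyclesExcept d 0 r (decomposeFin.symm (q.succ, e)) ↔ DvdCyclesExcept d q (r - 1) e := by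
  rw [DvdCyclesExcept, DvdCyclesExcept, minimalPeriod_decomposeFin_symm_succ_zero, Nat.cast_succ,
    ← eq_sub_iff_add_eq, Fin.forall_fin_succ]
  simp only [SameCycle.refl, not_true_eq_false, false_imp_iff, true_and,
    sameCycle_decomposeFin_symm_succ_zero_succ_iff]
  refine and_congr_right fun _ => forall_congr' fun x => imp_congr_right fun hx => ?_
  rw [minimalPeriod_decomposeFin_symm_succ_succ e q hx]

end

noncomputable def fdRooted (d n : ℕ) (r : ZMod d) : ℕ :=
  Nat.card {π : Perm (Fin (n + 1)) // DvdCyclesExcept d 0 r π}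

section Recursion

variable (d : ℕ)

theorem fd_zero : fd d 0 = 1 :=
  Nat.card_eq_one_iff_exists.2 ⟨⟨1, fun x => x.elim0⟩, fun _ => Subsingleton.elim _ _⟩

theorem fd_succ (n : ℕ) : fd d (n + 1) = fdRooted d n 0 :=
  Nat.card_congr (subtypeEquivRight fun _ => dvdCyclesExcept_zero_iff.symm)

theorem fdRooted_eq (n : ℕ) (r : ZMod d) :
    fdRooted d n r = (if r = 1 then fd d n else 0) +
      ∑ q : Fin n, Nat.card {e : Perm (Fin n) // DvdCyclesExcept d q (r - 1) e} := by
  rw [fdRooted, card_subtype_fin_succ, Fin.sum_univ_succ]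
  simp_rw [dvdCyclesExcept_decomposeFin_symm_succ_iff]
  congr 1
  split_ifs with hr
  · exact Nat.card_congr (subtypeEquivRight fun e => by
      simp [dvdCyclesExcept_decomposeFin_symm_zero_iff, hr])
  · simp [dvdCyclesExcept_decomposeFin_symm_zero_iff, hr]

theorem fdRooted_zero (r : ZMod d) : fdRooted d 0 r = if r = 1 then 1 else 0 := by
  simp [fdRooted_eq, fd_zero]

theorem fdRooted_succ (n : ℕ) (r : ZMod d) :
    fdRooted d (n + 1) r =
      (if r = 1 then fd d (n + 1) else 0) + (n + 1) * fdRooted d n (r - 1) := by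
  rw [fdRooted_eq, Finset.sum_congr rfl fun q _ => card_dvdCyclesExcept_eq d (r - 1) q 0]
  simp [fdRooted]

theorem fdRooted_one (n : ℕ) : fdRooted d n 1 = (n + 1) * fd d n := by
  cases n with
  | zero => rw [fdRooted_zero, if_pos rfl, fd_zero]
  | succ n => rw [fdRooted_succ, if_pos rfl, sub_self, ← fd_succ]; ring

theorem fdRooted_succ_of_ne_one (n : ℕ) {r : ZMod d} (hr : r ≠ 1) :
    fdRooted d (n + 1) r = (n + 1) * fdRooted d n (r - 1) := by
  rw [fdRooted_succ, if_neg hr, zero_add]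

theorem fdRooted_add_zero (k : ℕ) {j : ℕ} (hj : j < d) :
    fdRooted d (k + j) 0 = (k + j).descFactorial j * fdRooted d k (-j) := by
  induction j generalizing k with
  | zero => simp
  | succ j ih =>
    have hne : (-j : ZMod d) ≠ 1 := by
      rw [ne_eq, neg_eq_iff_eq_neg, ← sub_eq_zero, sub_neg_eq_add, ← Nat.cast_succ,
        ZMod.natCast_eq_zero_iff]
      exact Nat.not_dvd_of_pos_of_lt j.succ_pos hj
    rw [← add_assoc, add_right_comm, ih (k + 1) (by omega), fdRooted_succ_of_ne_one d k hne,
      Nat.descFactorial_succ, Nat.cast_succ, neg_add', Nat.add_sub_cancel]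
    ring

end Recursion

theorem prod_Icc_sub_eq_descFactorial (n k : ℕ) :
    ∏ i ∈ Finset.Icc 1 k, (n - i) = (n - 1).descFactorial k := by
  induction k with
  | zero => rfl
  | succ k ih =>
    rw [Finset.prod_Icc_succ_top (by omega), ih, Nat.descFactorial_succ, mul_comm,
      show n - (k + 1) = n - 1 - k by omega]

theorem stmt_0 (d n : ℕ) (hd : 2 ≤ d) (hn : d ≤ n) :
    fd d n = (∏ i ∈ Finset.Icc 1 (d - 2), (n - i)) * (n - d + 1) ^ 2 * fd d (n - d) := by
  obtain ⟨m, rfl⟩ := Nat.exists_eq_add_of_le' hn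
  obtain ⟨c, rfl⟩ := Nat.exists_eq_add_of_le' hd
  have hres : (-(c + 1 : ℕ) : ZMod (c + 2)) = 1 := by
    have := ZMod.natCast_self (c + 2)
    push_cast at this ⊢
    linear_combination -this
  rw [show m + (c + 2) = m + (c + 1) + 1 by omega, fd_succ, fdRooted_add_zero _ m (by omega),
    hres, fdRooted_one, prod_Icc_sub_eq_descFactorial, Nat.descFactorial_succ]
  simp only [show m + (c + 1) + 1 - 1 = m + (c + 1) by omega,
    show m + (c + 1) - c = m + 1 by omega, show c + 2 - 2 = c by omega,
    show m + (c + 1) + 1 - (c + 2) = m by omega]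
  ring
end

section
/- Let n = n' + n''. Let i(n, k, d) denote the proportion of permutations π ∈ S_n that admit pairwise disjoint π-invariant sets A_1,…,A_m with |A_i| = k_i and all cycles of π restricted to A_i having length divisible by d_i, where k = (k_1,…,k_m) and d = (d_1,…,d_m) and Σ k_i = n. If k = (k', k'') and d = (d', d'') where k' sums to n' and k'' sums to n'', then i(n, k, d) ≤ i(n', k', d') · i(n'', k'', d''). -/
/-!
If `π` admits blocks for `(k', k'')`, the union `S` of the first `m'` blocks is a `π`-invariant
set of size `n'`, and the restrictions of `π` to `S` and to its complement admit blocks for `k'`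
and `k''`. As `π` is recovered from `S` and the two restrictions, the number of such `π` is at
most `C(n' + n'', n')` times the product of the two counts, and dividing by
`(n' + n'')! = C(n' + n'', n') n'! n''!` gives the inequality.
-/

/-- `iProp n m k d` is the proportion of permutations `π` of `n` points that admit
pairwise disjoint `π`-invariant sets `A 0, …, A (m-1)` with `(A i).card = k i` and
all cycles of `π` restricted to `A i` of length divisible by `d i`. -/
noncomputable def iProp (n m : ℕ) (k d : Fin m → ℕ) : ℝ :=
  (Nat.card {π : Equiv.Perm (Fin n) //
      ∃ A : Fin m → Finset (Fin n),
        (∀ i j, i ≠ j → Disjoint (A i) (A j)) ∧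
        (∀ i, (A i).card = k i) ∧
        (∀ i, ∀ x ∈ A i, π x ∈ A i) ∧
        (∀ i, ∀ x ∈ A i, d i ∣ Function.minimalPeriod (⇑π) x)} : ℝ) /
    (n.factorial : ℝ)

open Function Finset

theorem Function.Semiconj.minimalPeriod_eq {α β : Type*} {fa : α → α} {fb : β → β}
    {g : α → β} (h : Semiconj g fa fb) (hg : Injective g) (x : α) :
    minimalPeriod fb (g x) = minimalPeriod fa x :=
  minimalPeriod_eq_minimalPeriod_iff.mpr fun n => by
    simp only [IsPeriodicPt, IsFixedPt, ← (h.iterate_right n).eq x, hg.eq_iff]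

namespace Equiv.Perm

variable {α β ι κ : Type*}

def IsDivisibleBlocks (k d : ι → ℕ) (π : Perm α) (A : ι → Finset α) : Prop :=
  Pairwise (_root_.Disjoint on A) ∧ (∀ i, #(A i) = k i) ∧
    (∀ i, ∀ x ∈ A i, π x ∈ A i) ∧ ∀ i, ∀ x ∈ A i, d i ∣ minimalPeriod π x

def HasDivisibleBlocks (k d : ι → ℕ) (π : Perm α) : Prop :=
  ∃ A, IsDivisibleBlocks k d π A

namespace IsDivisibleBlocks

variable {k d : ι → ℕ} {π : Perm α} {A : ι → Finset α}

theorem comp (hA : IsDivisibleBlocks k d π A) {f : κ → ι} (hf : Injective f) :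
    IsDivisibleBlocks (k ∘ f) (d ∘ f) π (A ∘ f) :=
  ⟨hA.1.comp_of_injective hf, fun i => hA.2.1 (f i), fun i => hA.2.2.1 (f i),
    fun i => hA.2.2.2 (f i)⟩

theorem permCongr (hA : IsDivisibleBlocks k d π A) (e : α ≃ β) :
    IsDivisibleBlocks k d (e.permCongr π) fun i => (A i).map e.toEmbedding := by
  obtain ⟨hdisj, hcard, hinv, hdvd⟩ := hA
  have hsemi : Semiconj e π (e.permCongr π) := fun x => by simp
  refine ⟨fun i j hij => (disjoint_map _).mpr (hdisj hij), fun i => by simp [hcard], ?_, ?_⟩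
  all_goals
    intro i y hy
    obtain ⟨x, hx, rfl⟩ := mem_map.mp hy
  · simpa using hinv i x hx
  · simpa [hsemi.minimalPeriod_eq e.injective] using hdvd i x hx

theorem subtypePerm {p : α → Prop} [DecidablePred p] (hA : IsDivisibleBlocks k d π A)
    (h : ∀ x, p (π x) ↔ p x) (hp : ∀ i, ∀ x ∈ A i, p x) :
    IsDivisibleBlocks k d (π.subtypePerm h) fun i => (A i).subtype p := by
  obtain ⟨hdisj, hcard, hinv, hdvd⟩ := hA
  have hsemi : Semiconj Subtype.val (π.subtypePerm h) π := fun _ => rfl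
  refine ⟨fun i j hij => ?_, fun i => ?_, fun i x hx => ?_, fun i x hx => ?_⟩
  · exact disjoint_left.mpr fun x hi hj =>
      disjoint_left.mp (hdisj hij) (mem_subtype.mp hi) (mem_subtype.mp hj)
  · rw [card_subtype, filter_true_of_mem (hp i), hcard]
  · exact mem_subtype.mpr (hinv i x (mem_subtype.mp hx))
  · rw [← hsemi.minimalPeriod_eq Subtype.val_injective]
    exact hdvd i x (mem_subtype.mp hx)

end IsDivisibleBlocks

theorem HasDivisibleBlocks.permCongr {k d : ι → ℕ} {π : Perm α}
    (h : HasDivisibleBlocks k d π) (e : α ≃ β) : HasDivisibleBlocks k d (e.permCongr π) :=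
  let ⟨_, hA⟩ := h; ⟨_, hA.permCongr e⟩

theorem card_hasDivisibleBlocks_congr (k d : ι → ℕ) (e : α ≃ β) :
    Nat.card {π : Perm α // HasDivisibleBlocks k d π} =
      Nat.card {π : Perm β // HasDivisibleBlocks k d π} :=
  Nat.card_congr <| e.permCongr.subtypeEquiv fun π =>
    ⟨(·.permCongr e), fun h => by
      rw [← e.permCongr.symm_apply_apply π]; exact h.permCongr e.symm⟩

theorem subtypeCongr_subtypePerm {p : α → Prop} [DecidablePred p] (π : Perm α)
    (h : ∀ x, p (π x) ↔ p x) :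
    (π.subtypePerm h).subtypeCongr (π.subtypePerm fun x => not_congr (h x)) = π := by
  ext x
  by_cases hx : p x <;> simp [hx]

theorem apply_mem_iff_of_mapsTo {π : Perm α} {s : Finset α} (h : Set.MapsTo π s s) (x : α) :
    π x ∈ s ↔ x ∈ s :=
  ⟨fun hx => by simpa using perm_symm_mapsTo_of_mapsTo π h hx, @h x⟩

theorem HasDivisibleBlocks.exists_split [DecidableEq α] {m' m'' : ℕ} {k' d' : Fin m' → ℕ}
    {k'' d'' : Fin m'' → ℕ} {π : Perm α}
    (h : HasDivisibleBlocks (Fin.append k' k'') (Fin.append d' d'') π) :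
    ∃ S : Finset α, #S = ∑ i, k' i ∧ ∃ hS : ∀ x, π x ∈ S ↔ x ∈ S,
      HasDivisibleBlocks k' d' (π.subtypePerm hS) ∧
        HasDivisibleBlocks k'' d''
          (π.subtypePerm (p := (· ∉ S)) fun x => not_congr (hS x)) := by
  obtain ⟨A, hA⟩ := h
  have hleft : IsDivisibleBlocks k' d' π (A ∘ Fin.castAdd m'') := by
    simpa [comp_def] using hA.comp (Fin.castAdd_injective m' m'')
  have hright : IsDivisibleBlocks k'' d'' π (A ∘ Fin.natAdd m') := by
    simpa [comp_def] using hA.comp (Fin.natAdd_injective m'' m')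
  set S := univ.biUnion (A ∘ Fin.castAdd m'')
  have hmem : ∀ x, x ∈ S ↔ ∃ i, x ∈ A (Fin.castAdd m'' i) := by simp [S]
  have hS : ∀ x, π x ∈ S ↔ x ∈ S := apply_mem_iff_of_mapsTo fun x hx => by
    obtain ⟨i, hi⟩ := (hmem x).1 hx
    exact (hmem _).2 ⟨i, hleft.2.2.1 i x hi⟩
  have hcard : #S = ∑ i, k' i := by
    rw [card_biUnion (hleft.1.set_pairwise _)]
    exact sum_congr rfl fun i _ => hleft.2.1 i
  have hcompl : ∀ i, ∀ x ∈ A (Fin.natAdd m' i), x ∉ S := fun i x hx hxS => by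
    obtain ⟨j, hj⟩ := (hmem x).1 hxS
    have hne : Fin.castAdd m'' j ≠ Fin.natAdd m' i := by
      simp only [ne_eq, Fin.ext_iff, Fin.val_castAdd, Fin.val_natAdd]; omega
    exact disjoint_left.mp (hA.1 hne) hj hx
  exact ⟨S, hcard, hS, ⟨_, hleft.subtypePerm hS fun i x hx => (hmem x).2 ⟨i, hx⟩⟩,
    ⟨_, hright.subtypePerm _ hcompl⟩⟩

theorem card_hasDivisibleBlocks_append_le [Fintype α] [DecidableEq α] {n' n'' m' m'' : ℕ}
    {k' d' : Fin m' → ℕ} {k'' d'' : Fin m'' → ℕ} (hα : Fintype.card α = n' + n'')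
    (hk' : ∑ i, k' i = n') :
    Nat.card {π : Perm α // HasDivisibleBlocks (Fin.append k' k'') (Fin.append d' d'') π} ≤
      (n' + n'').choose n' * (Nat.card {σ : Perm (Fin n') // HasDivisibleBlocks k' d' σ} *
        Nat.card {τ : Perm (Fin n'') // HasDivisibleBlocks k'' d'' τ}) := by
  let Pieces := Σ S : {S : Finset α // #S = n'},
    {σ : Perm {x // x ∈ S.1} // HasDivisibleBlocks k' d' σ} ×
      {τ : Perm {x // x ∉ S.1} // HasDivisibleBlocks k'' d'' τ}
  let glue : Pieces → Perm α := fun ⟨_, σ, τ⟩ => σ.1.subtypeCongr τ.1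
  have hglue : {π | HasDivisibleBlocks (Fin.append k' k'') (Fin.append d' d'') π} ⊆
      Set.range glue := fun π hπ => by
    obtain ⟨S, hcard, hS, h', h''⟩ := hπ.exists_split
    exact ⟨⟨⟨S, hcard.trans hk'⟩, ⟨_, h'⟩, ⟨_, h''⟩⟩,
      subtypeCongr_subtypePerm π hS⟩
  have hpieces (S : {S : Finset α // #S = n'}) :
      Nat.card ({σ : Perm {x // x ∈ S.1} // HasDivisibleBlocks k' d' σ} ×
        {τ : Perm {x // x ∉ S.1} // HasDivisibleBlocks k'' d'' τ}) =
      Nat.card {σ : Perm (Fin n') // HasDivisibleBlocks k' d' σ} *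
        Nat.card {τ : Perm (Fin n'') // HasDivisibleBlocks k'' d'' τ} := by
    have hin : Fintype.card {x // x ∈ S.1} = n' := by simp [S.2]
    have hout : Fintype.card {x // x ∉ S.1} = n'' := by
      rw [Fintype.card_subtype_compl, hin, hα, Nat.add_sub_cancel_left]
    rw [Nat.card_prod, card_hasDivisibleBlocks_congr k' d' (Fintype.equivFinOfCardEq hin),
      card_hasDivisibleBlocks_congr k'' d'' (Fintype.equivFinOfCardEq hout)]
  calc _ ≤ Nat.card (Set.range glue) := Nat.card_mono (Set.toFinite _) hglue
    _ ≤ Nat.card Pieces := Finite.card_range_le glue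
    _ = _ := by
      rw [Nat.card_sigma, sum_congr rfl fun S _ => hpieces S, sum_const, card_univ,
        Fintype.card_finset_len, hα, smul_eq_mul]

end Equiv.Perm

open Equiv Perm in
theorem iProp_eq_card_hasDivisibleBlocks (n m : ℕ) (k d : Fin m → ℕ) :
    iProp n m k d = Nat.card {π : Perm (Fin n) // HasDivisibleBlocks k d π} / n.factorial :=
  rfl

open Equiv Perm Nat in
theorem stmt_4_general (n' n'' m' m'' : ℕ) (k' d' : Fin m' → ℕ) (k'' d'' : Fin m'' → ℕ)
    (hk' : ∑ i, k' i = n') :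
    iProp (n' + n'') (m' + m'') (Fin.append k' k'') (Fin.append d' d'') ≤
      iProp n' m' k' d' * iProp n'' m'' k'' d'' := by
  simp only [iProp_eq_card_hasDivisibleBlocks]
  rw [← add_choose_mul_factorial_mul_factorial, ← choose_symm_add]
  have hcount := card_hasDivisibleBlocks_append_le (k'' := k'') (d' := d') (d'' := d'')
    (Fintype.card_fin (n' + n'')) hk'
  set N' := Nat.card {σ : Perm (Fin n') // HasDivisibleBlocks k' d' σ}
  set N'' := Nat.card {τ : Perm (Fin n'') // HasDivisibleBlocks k'' d'' τ}
  have hchoose : ((n' + n'').choose n' : ℝ) ≠ 0 :=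
    mod_cast (choose_pos le_self_add).ne'
  calc _ ≤ (((n' + n'').choose n' * (N' * N'') : ℕ) : ℝ) /
        ((n' + n'').choose n' * n' ! * n'' ! : ℕ) := by
        gcongr
    _ = N' / n' ! * (N'' / n'' !) := by
        push_cast
        field_simp

theorem stmt_4 (n' n'' m' m'' : ℕ) (k' d' : Fin m' → ℕ) (k'' d'' : Fin m'' → ℕ)
    (hk' : ∑ i, k' i = n') (hk'' : ∑ i, k'' i = n'') :
    iProp (n' + n'') (m' + m'') (Fin.append k' k'') (Fin.append d' d'') ≤
      iProp n' m' k' d' * iProp n'' m'' k'' d'' :=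
  stmt_4_general n' n'' m' m'' k' d' k'' d'' hk'
end

section
/- Let X_1,…,X_k be independent Poisson random variables with E X_j = 1/j, and let L_m(c) be the set of m-tuples (Σ_j j·x_{1j}, …, Σ_j j·x_{mj}) over m×k nonnegative integer matrices with column sums c_j. If k ≤ k', then E|L_m(X_1,…,X_{k'})| ≤ (k'/k)^{m-1} · E|L_m(X_1,…,X_k)|. -/
/-- `Lset m k c` is the set of `m`-tuples `(∑ j, j * x i j)_i` (with `j` ranging over
`1, …, k`) as `x` ranges over `m × k` matrices of nonnegative integers whose `j`-th
column sums to `c j`. -/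
def Lset (m k : ℕ) (c : Fin k → ℕ) : Set (Fin m → ℕ) :=
  {v | ∃ x : Fin m → Fin k → ℕ,
        (∀ j, ∑ i, x i j = c j) ∧ ∀ i, v i = ∑ j, (j.val + 1) * x i j}

/-- The Poisson probability mass function with mean `μ`. -/
noncomputable def poissonP (μ : ℝ) (r : ℕ) : ℝ :=
  Real.exp (-μ) * μ ^ r / r.factorial

/-- The expectation of `f (X 1, …, X k)` where `X 1, …, X k` are independent
Poisson random variables with `E (X j) = 1 / j`.  (The variable indexed by
`j : Fin k` is Poisson with mean `1 / (j + 1)`.) -/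
noncomputable def pexp (k : ℕ) (f : (Fin k → ℕ) → ℝ) : ℝ :=
  ∑' c : Fin k → ℕ, (∏ j : Fin k, poissonP (1 / ((j : ℕ) + 1 : ℝ)) (c j)) * f c

/-!
Splitting off the last column of the matrix gives
`|L_m(c_1, …, c_{n+1})| ≤ |L_m(c_1, …, c_n)| · m ^ c_{n+1}`, since that column is one of at most
`m ^ c_{n+1}` compositions of `c_{n+1}` into `m` parts. For `X` Poisson of mean `μ`,
`E m ^ X = exp (μ (m - 1))`, so by independence adding `X_{n+1}` multiplies the expectation by at
most `exp ((m - 1) / (n + 1))`. Iterating from `k` to `k'` gives the factor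
`exp ((m - 1) (H_{k'} - H_k)) ≤ (k' / k) ^ (m - 1)`, because `H_n - log n` is decreasing.
-/

open scoped ENNReal

theorem Set.ncard_image2_le {α β γ : Type*} (f : α → β → γ) {s : Set α} {t : Set β}
    (hs : s.Finite) (ht : t.Finite) : (Set.image2 f s t).ncard ≤ s.ncard * t.ncard := by
  rw [← Set.image_uncurry_prod, ← Set.ncard_prod]
  exact Set.ncard_image_le (hs.prod ht)

theorem Sym.ofVector_surjective {α : Type*} {n : ℕ} :
    Function.Surjective (Sym.ofVector : List.Vector α n → Sym α n) := by
  rintro ⟨s, hs⟩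
  obtain ⟨l, rfl⟩ := Quot.exists_rep s
  exact ⟨⟨l, hs⟩, rfl⟩

theorem finite_setOf_sum_eq (m c : ℕ) : {t : Fin m → ℕ | ∑ i, t i = c}.Finite :=
  Set.finite_coe_iff.mp (Finite.of_equiv _ (Sym.equivNatSumOfFintype (Fin m) c))

/-- Every composition of `c` into `m` parts is the type of a word of length `c` over `Fin m`. -/
theorem ncard_setOf_sum_eq_le (m c : ℕ) : {t : Fin m → ℕ | ∑ i, t i = c}.ncard ≤ m ^ c := by
  rw [← Nat.card_coe_set_eq, Set.coe_ofPred,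
    ← Nat.card_congr (Sym.equivNatSumOfFintype (Fin m) c)]
  calc Nat.card (Sym (Fin m) c) ≤ Nat.card (List.Vector (Fin m) c) :=
        Nat.card_le_card_of_surjective _ Sym.ofVector_surjective
    _ = m ^ c := by simp [Nat.card_eq_fintype_card, card_vector]

theorem Lset_zero (m : ℕ) (c : Fin 0 → ℕ) : Lset m 0 c = {0} := by
  ext v
  simp only [Lset, Set.mem_ofPred_eq, Set.mem_singleton_iff, Finset.univ_eq_empty,
    Finset.sum_empty, IsEmpty.forall_iff, true_and]
  exact ⟨fun ⟨_, hv⟩ => funext hv, fun hv => ⟨0, congrFun hv⟩⟩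

theorem Lset_succ_subset (m n : ℕ) (c : Fin (n + 1) → ℕ) :
    Lset m (n + 1) c ⊆ Set.image2 (fun u t => u + (n + 1) • t)
      (Lset m n (Fin.init c)) {t | ∑ i, t i = c (Fin.last n)} := by
  rintro v ⟨x, hcol, hv⟩
  refine ⟨_, ⟨fun i => Fin.init (x i), fun j => hcol j.castSucc, fun i => rfl⟩,
    fun i => x i (Fin.last n), hcol (Fin.last n), funext fun i => ?_⟩
  simp [hv i, Fin.sum_univ_castSucc, Fin.init]

theorem finite_Lset (m n : ℕ) (c : Fin n → ℕ) : (Lset m n c).Finite := by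
  induction n with
  | zero => simp [Lset_zero]
  | succ n ih =>
    exact ((ih _).image2 _ (finite_setOf_sum_eq m _)).subset (Lset_succ_subset m n c)

theorem ncard_Lset_succ_le (m n : ℕ) (c : Fin (n + 1) → ℕ) :
    (Lset m (n + 1) c).ncard ≤ (Lset m n (Fin.init c)).ncard * m ^ c (Fin.last n) := by
  have hL := finite_Lset m n (Fin.init c)
  have hT := finite_setOf_sum_eq m (c (Fin.last n))
  exact (Set.ncard_le_ncard (Lset_succ_subset m n c) (hL.image2 _ hT)).trans <|
    (Set.ncard_image2_le _ hL hT).trans (Nat.mul_le_mul_left _ (ncard_setOf_sum_eq_le m _))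

theorem poissonP_nonneg {μ : ℝ} (hμ : 0 ≤ μ) (r : ℕ) : 0 ≤ poissonP μ r := by
  unfold poissonP
  positivity

theorem hasSum_poissonP_mul_pow (μ x : ℝ) :
    HasSum (fun r => poissonP μ r * x ^ r) (Real.exp (μ * (x - 1))) := by
  convert! (NormedSpace.expSeries_div_hasSum_exp (μ * x)).mul_left (Real.exp (-μ)) using 1
  · funext r
    rw [poissonP]
    ring
  · rw [← Real.exp_eq_exp_ℝ, ← Real.exp_add]
    ring_nf

theorem tsum_ofReal_poissonP_mul_pow {μ x : ℝ} (hμ : 0 ≤ μ) (hx : 0 ≤ x) :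
    ∑' r, ENNReal.ofReal (poissonP μ r) * ENNReal.ofReal x ^ r
      = ENNReal.ofReal (Real.exp (μ * (x - 1))) := by
  simp_rw [← ENNReal.ofReal_pow hx, ← ENNReal.ofReal_mul (poissonP_nonneg hμ _)]
  rw [← ENNReal.ofReal_tsum_of_nonneg
    (fun r => mul_nonneg (poissonP_nonneg hμ r) (pow_nonneg hx r))
    (hasSum_poissonP_mul_pow μ x).summable, (hasSum_poissonP_mul_pow μ x).tsum_eq]

/-- The `ℝ≥0∞`-valued counterpart of `pexp`: no summability side conditions arise. -/
noncomputable def lpexp (k : ℕ) (f : (Fin k → ℕ) → ℝ≥0∞) : ℝ≥0∞ :=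
  ∑' c : Fin k → ℕ, (∏ j : Fin k, ENNReal.ofReal (poissonP (1 / ((j : ℕ) + 1 : ℝ)) (c j))) * f c

theorem pexp_toReal (k : ℕ) {f : (Fin k → ℕ) → ℝ≥0∞} (hf : ∀ c, f c ≠ ⊤) :
    pexp k (fun c => (f c).toReal) = (lpexp k f).toReal := by
  rw [lpexp, ENNReal.tsum_toReal_eq fun c => ENNReal.mul_ne_top
    (ENNReal.prod_ne_top fun _ _ => ENNReal.ofReal_ne_top) (hf c)]
  refine tsum_congr fun c => ?_
  rw [ENNReal.toReal_mul, ENNReal.toReal_prod]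
  congr 1
  exact Finset.prod_congr rfl fun j _ =>
    (ENNReal.toReal_ofReal (poissonP_nonneg (by positivity) _)).symm

theorem lpexp_mono {k : ℕ} {f g : (Fin k → ℕ) → ℝ≥0∞} (h : ∀ c, f c ≤ g c) :
    lpexp k f ≤ lpexp k g :=
  ENNReal.tsum_le_tsum fun c => mul_le_mul_right (h c) _

theorem lpexp_succ_mul (k : ℕ) (g : (Fin k → ℕ) → ℝ≥0∞) (h : ℕ → ℝ≥0∞) :
    lpexp (k + 1) (fun c => g (Fin.init c) * h (c (Fin.last k)))
      = lpexp k g * ∑' r, ENNReal.ofReal (poissonP (1 / ((k : ℝ) + 1)) r) * h r := by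
  rw [lpexp, ← (Fin.snocEquiv fun _ : Fin (k + 1) => ℕ).tsum_eq (α := ℝ≥0∞),
    ENNReal.tsum_prod', ENNReal.tsum_comm, lpexp, ← ENNReal.tsum_mul_right]
  congr 1; funext c
  rw [← ENNReal.tsum_mul_left]
  congr 1; funext r
  simp only [Fin.snocEquiv, Equiv.coe_fn_mk, Fin.prod_univ_castSucc, Fin.snoc_castSucc,
    Fin.snoc_last, Fin.init_snoc, Fin.val_castSucc, Fin.val_last]
  ring

noncomputable def expectedCardLset (m k : ℕ) : ℝ≥0∞ :=
  lpexp k fun c => ((Lset m k c).ncard : ℝ≥0∞)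

theorem expectedCardLset_zero (m : ℕ) : expectedCardLset m 0 = 1 := by
  simp [expectedCardLset, lpexp, Lset_zero]

theorem expectedCardLset_succ_le (m n : ℕ) :
    expectedCardLset m (n + 1)
      ≤ expectedCardLset m n * ENNReal.ofReal (Real.exp (1 / ((n : ℝ) + 1) * (m - 1))) :=
  calc expectedCardLset m (n + 1)
      ≤ lpexp (n + 1) fun c =>
          ((Lset m n (Fin.init c)).ncard : ℝ≥0∞) * (m : ℝ≥0∞) ^ c (Fin.last n) :=
        lpexp_mono fun c => by exact_mod_cast ncard_Lset_succ_le m n c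
    _ = expectedCardLset m n
          * ∑' r, ENNReal.ofReal (poissonP (1 / ((n : ℝ) + 1)) r) * (m : ℝ≥0∞) ^ r :=
        lpexp_succ_mul n (fun c => ((Lset m n c).ncard : ℝ≥0∞)) fun r => (m : ℝ≥0∞) ^ r
    _ = _ := by
        rw [← ENNReal.ofReal_natCast, tsum_ofReal_poissonP_mul_pow (by positivity) m.cast_nonneg]

theorem expectedCardLset_le_of_le (m : ℕ) {k k' : ℕ} (hkk' : k ≤ k') :
    expectedCardLset m k'
      ≤ expectedCardLset m k
          * ENNReal.ofReal (Real.exp ((m - 1) * (harmonic k' - harmonic k))) := by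
  induction k', hkk' using Nat.le_induction with
  | base => simp
  | succ n hkn ih =>
    calc expectedCardLset m (n + 1)
        ≤ expectedCardLset m n * ENNReal.ofReal (Real.exp (1 / ((n : ℝ) + 1) * (m - 1))) :=
          expectedCardLset_succ_le m n
      _ ≤ expectedCardLset m k * ENNReal.ofReal (Real.exp ((m - 1) * (harmonic n - harmonic k)))
            * ENNReal.ofReal (Real.exp (1 / ((n : ℝ) + 1) * (m - 1))) := by gcongr
      _ = _ := by
        rw [mul_assoc, ← ENNReal.ofReal_mul (Real.exp_nonneg _), ← Real.exp_add, harmonic_succ]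
        push_cast
        ring_nf

theorem expectedCardLset_ne_top (m k : ℕ) : expectedCardLset m k ≠ ⊤ :=
  ne_top_of_le_ne_top (by simp [expectedCardLset_zero])
    (expectedCardLset_le_of_le m (Nat.zero_le k))

theorem harmonic_sub_harmonic_le_log {k k' : ℕ} (hk : 1 ≤ k) (hkk' : k ≤ k') :
    (harmonic k' - harmonic k : ℝ) ≤ Real.log k' - Real.log k := by
  have h := Real.strictAnti_eulerMascheroniSeq'.antitone hkk'
  simp only [Real.eulerMascheroniSeq', Nat.one_le_iff_ne_zero.mp hk,
    Nat.one_le_iff_ne_zero.mp (hk.trans hkk'), if_false] at h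
  linarith

theorem exp_mul_harmonic_sub_le {m k k' : ℕ} (hm : 1 ≤ m) (hk : 1 ≤ k) (hkk' : k ≤ k') :
    Real.exp ((m - 1) * (harmonic k' - harmonic k)) ≤ ((k' : ℝ) / k) ^ (m - 1) := by
  have hk0 : (0 : ℝ) < k := by exact_mod_cast hk
  have hk'0 : (0 : ℝ) < k' := by exact_mod_cast hk.trans hkk'
  calc Real.exp ((m - 1) * (harmonic k' - harmonic k))
      ≤ Real.exp (((m - 1 : ℕ) : ℝ) * Real.log ((k' : ℝ) / k)) := by
        rw [Nat.cast_sub hm, Nat.cast_one, Real.log_div hk'0.ne' hk0.ne']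
        exact Real.exp_le_exp.mpr (mul_le_mul_of_nonneg_left
          (harmonic_sub_harmonic_le_log hk hkk') (sub_nonneg.mpr (by exact_mod_cast hm)))
    _ = ((k' : ℝ) / k) ^ (m - 1) := by
        rw [Real.exp_nat_mul, Real.exp_log (div_pos hk'0 hk0)]

theorem stmt_9 (m k k' : ℕ) (hm : 1 ≤ m) (hk : 1 ≤ k) (hkk' : k ≤ k') :
    pexp k' (fun c => (Nat.card (Lset m k' c) : ℝ)) ≤
      ((k' : ℝ) / k) ^ (m - 1) * pexp k (fun c => (Nat.card (Lset m k c) : ℝ)) := by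
  have hpexp (n : ℕ) :
      pexp n (fun c => (Nat.card (Lset m n c) : ℝ)) = (expectedCardLset m n).toReal := by
    simpa [expectedCardLset] using
      pexp_toReal n (f := fun c => ((Lset m n c).ncard : ℝ≥0∞)) fun _ => ENNReal.natCast_ne_top _
  rw [hpexp, hpexp, mul_comm]
  calc (expectedCardLset m k').toReal
      ≤ (expectedCardLset m k
          * ENNReal.ofReal (Real.exp ((m - 1) * (harmonic k' - harmonic k)))).toReal :=
        ENNReal.toReal_mono
          (ENNReal.mul_ne_top (expectedCardLset_ne_top m k) ENNReal.ofReal_ne_top)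
          (expectedCardLset_le_of_le m hkk')
    _ ≤ (expectedCardLset m k).toReal * ((k' : ℝ) / k) ^ (m - 1) := by
        rw [ENNReal.toReal_mul, ENNReal.toReal_ofReal (Real.exp_nonneg _)]
        gcongr
        exact exp_mul_harmonic_sub_le hm hk hkk'
end

section
/- Let X be a Poisson random variable with mean 1/j for an integer j ≥ 1, and let a ≥ 1, m ≥ 1 be integers. Then E[X^a · m^X] ≤ e^{2^a m}/j. -/
/-
Since `μ ≤ 1` and the `r = 0` term vanishes, `μ ^ r * r ^ a ≤ μ * r ^ a`; then `r < 2 ^ r` gives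
`r ^ a ≤ (2 ^ a) ^ r`, and `exp (-μ) ≤ 1`. Summing, the expectation is at most
`μ * ∑ (2 ^ a * m) ^ r / r! = μ * exp (2 ^ a * m)`.
-/

open Nat

lemma cast_pow_le_two_pow_pow (r a : ℕ) : (r : ℝ) ^ a ≤ ((2 : ℝ) ^ a) ^ r := by
  rw [← pow_mul, mul_comm, pow_mul]
  exact_mod_cast Nat.pow_le_pow_left (Nat.lt_two_pow_self (n := r)).le a

lemma pow_mul_cast_pow_le {μ : ℝ} (hμ₀ : 0 ≤ μ) (hμ₁ : μ ≤ 1) {a : ℕ} (ha : a ≠ 0) (r : ℕ) :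
    μ ^ r * (r : ℝ) ^ a ≤ μ * ((2 : ℝ) ^ a) ^ r := by
  rcases r with _ | s
  · simp [ha, hμ₀]
  · gcongr
    · exact pow_le_of_le_one hμ₀ hμ₁ s.succ_ne_zero
    · exact cast_pow_le_two_pow_pow _ a

lemma poissonP_mul_pow_le {μ : ℝ} (hμ₀ : 0 ≤ μ) (hμ₁ : μ ≤ 1) {a : ℕ} (ha : a ≠ 0) {x : ℝ}
    (hx : 0 ≤ x) (r : ℕ) :
    poissonP μ r * ((r : ℝ) ^ a * x ^ r) ≤ μ * ((2 ^ a * x) ^ r / r !) := by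
  calc poissonP μ r * ((r : ℝ) ^ a * x ^ r)
      = Real.exp (-μ) * (μ ^ r * (r : ℝ) ^ a) * x ^ r / r ! := by unfold poissonP; ring
    _ ≤ 1 * (μ * ((2 : ℝ) ^ a) ^ r) * x ^ r / r ! := by
        gcongr ?_ * ?_ * _ / _
        · exact Real.exp_le_one_iff.mpr (neg_nonpos.mpr hμ₀)
        · exact pow_mul_cast_pow_le hμ₀ hμ₁ ha r
    _ = μ * ((2 ^ a * x) ^ r / r !) := by ring

lemma tsum_poissonP_mul_pow_le {μ : ℝ} (hμ₀ : 0 ≤ μ) (hμ₁ : μ ≤ 1) {a : ℕ} (ha : a ≠ 0) {x : ℝ}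
    (hx : 0 ≤ x) :
    ∑' r : ℕ, poissonP μ r * ((r : ℝ) ^ a * x ^ r) ≤ μ * Real.exp (2 ^ a * x) := by
  have hexp : HasSum (fun r : ℕ ↦ μ * ((2 ^ a * x) ^ r / r !)) (μ * Real.exp (2 ^ a * x)) := by
    rw [Real.exp_eq_exp_ℝ]
    exact (NormedSpace.expSeries_div_hasSum_exp _).mul_left μ
  have hterm_nonneg (r : ℕ) : 0 ≤ poissonP μ r * ((r : ℝ) ^ a * x ^ r) := by
    unfold poissonP; positivity
  have hbound := poissonP_mul_pow_le hμ₀ hμ₁ ha hx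
  exact hasSum_le hbound (Summable.of_nonneg_of_le hterm_nonneg hbound hexp.summable).hasSum hexp

theorem stmt_11_general (j a m : ℕ) (ha : 1 ≤ a) :
    (∑' r : ℕ, poissonP (1 / (j : ℝ)) r * ((r : ℝ) ^ a * (m : ℝ) ^ r)) ≤
      Real.exp ((2 : ℝ) ^ a * m) / j := by
  have hμ₁ : 1 / (j : ℝ) ≤ 1 := by
    rcases j.eq_zero_or_pos with rfl | hj
    · simp
    · exact div_le_one_of_le₀ (by exact_mod_cast hj) (by positivity)
  calc _ ≤ 1 / (j : ℝ) * Real.exp ((2 : ℝ) ^ a * m) :=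
        tsum_poissonP_mul_pow_le (by positivity) hμ₁ (by omega) m.cast_nonneg
    _ = Real.exp ((2 : ℝ) ^ a * m) / j := one_div_mul_eq_div _ _

theorem stmt_11 (j a m : ℕ) (hj : 1 ≤ j) (ha : 1 ≤ a) (hm : 1 ≤ m) :
    (∑' r : ℕ, poissonP (1 / (j : ℝ)) r * ((r : ℝ) ^ a * (m : ℝ) ^ r)) ≤
      Real.exp ((2 : ℝ) ^ a * m) / j :=
  stmt_11_general j a m ha
end

section
/- For m ≥ 1 and r ≥ 1, let L*_m(a) for a = (a_1,…,a_r) ∈ N^r be the set of m-tuples (Σ_{j∈P_1} a_j, …, Σ_{j∈P_m} a_j) as (P_1,…,P_m) ranges over ordered partitions of {1,…,r} into m (possibly empty) parts. Then for any 0 ≤ j ≤ r, |L*_m(a)| ≤ (1 + ã_1 + ⋯ + ã_j)^{m-1} · m^{r-j}, where ã_1 ≤ ⋯ ≤ ã_r is the increasing rearrangement of a. -/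
/-!
Fix a set `T` of indices. A vector `(∑_{s ∈ P_i} a_s)_i` is determined by the parts
containing the indices outside `T` (at most `m ^ (r - |T|)` choices) together with the
partial sums `∑_{s ∈ P_i ∩ T} a_s`; these lie in `[0, ∑_T a]` and add up to `∑_T a`, so all
but one of them are free (at most `(1 + ∑_T a) ^ (m - 1)` choices). Taking for `T` the
indices of the `j` smallest entries gives the bound.
-/

/-- `Lstar m r a` is the set of `m`-tuples `(∑_{s ∈ P 1} a s, …, ∑_{s ∈ P m} a s)`
as `(P 1, …, P m)` ranges over ordered partitions of `{1, …, r}` into `m` possibly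
empty parts; such a partition is encoded by a function `P : Fin r → Fin m`. -/
def Lstar (m r : ℕ) (a : Fin r → ℕ) : Set (Fin m → ℕ) :=
  {v | ∃ P : Fin r → Fin m,
        ∀ i, v i = ∑ s ∈ Finset.univ.filter (fun s => P s = i), a s}

open Finset

theorem Nat.card_range_le_of_factorsThrough {α β γ : Type*} {f : α → β} {g : α → γ}
    [Finite (Set.range g)] (h : f.FactorsThrough g) :
    Nat.card (Set.range f) ≤ Nat.card (Set.range g) := by
  refine Nat.card_le_card_of_surjective
    (fun y : Set.range g => ⟨f y.2.choose, Set.mem_range_self _⟩) ?_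
  rintro ⟨_, a, rfl⟩
  exact ⟨⟨g a, a, rfl⟩, Subtype.ext (h (Set.mem_range.mp ⟨a, rfl⟩).choose_spec)⟩

theorem Finset.eq_of_sum_eq_of_forall_ne {ι M : Type*} [Fintype ι] [AddCancelCommMonoid M]
    {f g : ι → M} (i₀ : ι) (hsum : ∑ i, f i = ∑ i, g i) (h : ∀ i ≠ i₀, f i = g i) : f = g := by
  classical
  have hrest : ∑ i ∈ univ.erase i₀, f i = ∑ i ∈ univ.erase i₀, g i :=
    sum_congr rfl fun i hi => h i (ne_of_mem_erase hi)
  funext i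
  by_cases hi : i = i₀
  · subst hi
    rw [← add_sum_erase _ _ (mem_univ i), ← add_sum_erase _ _ (mem_univ i), hrest] at hsum
    exact add_right_cancel hsum
  · exact h i hi

section FiberSum

variable {ι κ M : Type*} [DecidableEq ι] [AddCommMonoid M]

def fiberSum (T : Finset κ) (a : κ → M) (P : κ → ι) (i : ι) : M :=
  ∑ s ∈ T with P s = i, a s

theorem fiberSum_congr {T : Finset κ} (a : κ → M) {P Q : κ → ι} (h : ∀ s ∈ T, P s = Q s) :
    fiberSum T a P = fiberSum T a Q := by
  funext i
  exact sum_congr (filter_congr fun s hs => by rw [h s hs]) fun _ _ => rfl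

theorem sum_fiberSum [Fintype ι] (T : Finset κ) (a : κ → M) (P : κ → ι) :
    ∑ i, fiberSum T a P i = ∑ s ∈ T, a s :=
  sum_fiberwise T P a

theorem fiberSum_univ_eq_add_compl [Fintype κ] [DecidableEq κ] (T : Finset κ) (a : κ → M)
    (P : κ → ι) (i : ι) : fiberSum univ a P i = fiberSum T a P i + fiberSum Tᶜ a P i := by
  rw [fiberSum, fiberSum, fiberSum, ← sum_union (disjoint_filter_filter disjoint_compl_right),
    ← filter_union, union_compl]

theorem fiberSum_le_sum (T : Finset κ) (a : κ → ℕ) (P : κ → ι) (i : ι) :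
    fiberSum T a P i ≤ ∑ s ∈ T, a s :=
  sum_le_sum_of_subset (filter_subset _ _)

theorem card_range_fiberSum_le [Fintype ι] [Nonempty ι] [Fintype κ] [DecidableEq κ]
    (a : κ → ℕ) (T : Finset κ) :
    Nat.card (Set.range (fiberSum univ a : (κ → ι) → ι → ℕ)) ≤
      (1 + ∑ s ∈ T, a s) ^ (Fintype.card ι - 1) * Fintype.card ι ^ #Tᶜ := by
  obtain ⟨i₀⟩ := ‹Nonempty ι›
  let encode (P : κ → ι) : (↥(Tᶜ : Finset κ) → ι) × ({i // i ≠ i₀} → Fin (∑ s ∈ T, a s + 1)) :=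
    (fun s => P s, fun i => ⟨fiberSum T a P i, Nat.lt_succ_of_le (fiberSum_le_sum T a P i)⟩)
  have hfactors : (fiberSum univ a : (κ → ι) → ι → ℕ).FactorsThrough encode := by
    intro P Q hPQ
    simp only [encode, Prod.mk.injEq, funext_iff, Fin.ext_iff, Subtype.forall] at hPQ
    have hT : fiberSum T a P = fiberSum T a Q :=
      eq_of_sum_eq_of_forall_ne i₀ (by rw [sum_fiberSum, sum_fiberSum]) hPQ.2
    have hTc : fiberSum Tᶜ a P = fiberSum Tᶜ a Q := fiberSum_congr a hPQ.1
    funext i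
    rw [fiberSum_univ_eq_add_compl T, fiberSum_univ_eq_add_compl T, hT, hTc]
  calc Nat.card (Set.range (fiberSum univ a : (κ → ι) → ι → ℕ))
      ≤ Nat.card (Set.range encode) := Nat.card_range_le_of_factorsThrough hfactors
    _ ≤ Nat.card ((↥(Tᶜ : Finset κ) → ι) × ({i // i ≠ i₀} → Fin (∑ s ∈ T, a s + 1))) :=
        Nat.card_le_card_of_injective _ Subtype.val_injective
    _ = _ := by
        simp [Nat.card_eq_fintype_card, Fintype.card_subtype_compl, card_compl, add_comm, mul_comm]

end FiberSum

theorem Lstar_eq_range_fiberSum (m r : ℕ) (a : Fin r → ℕ) :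
    Lstar m r a = Set.range (fiberSum univ a) := by
  ext v
  simp only [Lstar, Set.mem_ofPred_eq, Set.mem_range, funext_iff, fiberSum, eq_comm]

theorem stmt_13_general (m r : ℕ) (hm : 1 ≤ m) (a : Fin r → ℕ)
    (j : ℕ) :
    Nat.card (Lstar m r a) ≤
      (1 + ∑ i ∈ Finset.univ.filter (fun i : Fin r => (i : ℕ) < j),
          a (Tuple.sort a i)) ^ (m - 1) * m ^ (r - j) := by
  have : Nonempty (Fin m) := ⟨⟨0, hm⟩⟩
  let T := (univ.filter fun i : Fin r => (i : ℕ) < j).map (Tuple.sort a).toEmbedding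
  have hcard : #Tᶜ = r - j := by
    rw [card_compl, card_map, Fin.card_filter_val_lt, Fintype.card_fin]
    omega
  simpa [Lstar_eq_range_fiberSum, T, hcard] using card_range_fiberSum_le (ι := Fin m) a T

theorem stmt_13 (m r : ℕ) (hm : 1 ≤ m) (hr : 1 ≤ r) (a : Fin r → ℕ)
    (j : ℕ) (hj : j ≤ r) :
    Nat.card (Lstar m r a) ≤
      (1 + ∑ i ∈ Finset.univ.filter (fun i : Fin r => (i : ℕ) < j),
          a (Tuple.sort a i)) ^ (m - 1) * m ^ (r - j) :=
  stmt_13_general m r hm a j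
end

section
/- Define c_m by the power series identity exp(Σ_{k≥1} z^k/k²) = Σ_{m≥0} c_m z^m. Then c_m = O(1/m²), i.e., there is an absolute constant C with c_m ≤ C/m² for all m ≥ 1. -/
/-- The coefficients `c m` of the power series `exp (∑_{k ≥ 1} z ^ k / k ^ 2)`,
given by `c 0 = 1` and the recurrence `c m = (1 / m) ∑_{k = 1}^{m} c (m - k) / k`,
i.e. `c m = (1 / m) ∑_{i = 0}^{m - 1} c i / (m - i)`. -/
noncomputable def cseq : ℕ → ℝ
  | 0 => 1
  | m + 1 =>
      (1 / ((m : ℝ) + 1)) * ∑ i : Fin (m + 1), cseq i / (((m : ℝ) + 1) - (i : ℕ))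

/-!
Bootstrap the recurrence `m c_m = 1/m + ∑_{0<j<m} c_j / (m - j)`. If `c_j ≤ A j^{-3/2}` for
`0 < j < m`, the sum is at most `A ∑_{0<j<m} 1 / (j^{3/2} (m - j)) ≤ 14 A / m`: split at `j = m/2`,
and use that `∑ j^{-3/2} ≤ 3` while `∑ 1/(m - j) ≤ 2 √m`. Hence `c_m ≤ (1 + 14 A) / m²`.
With `A = 15³` this is below `A m^{-3/2}` once `√m > 15`, and `c_m ≤ 1 ≤ A m^{-3/2}` for smaller
`m`, so strong induction gives `c_m ≤ 15³ m^{-3/2}`; one more application gives `c_m = O(1/m²)`.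
The detour through the exponent `3/2` is needed because `∑ 1/j² > 1`, so an induction on
`c_m ≤ A / m²` alone does not close.
-/

open Finset Real

lemma one_div_le_two_mul_sqrt_sub_sqrt {y : ℝ} (hy : 1 ≤ y) : 1 / y ≤ 2 * (√y - √(y - 1)) := by
  have ha := sq_sqrt (by linarith : 0 ≤ y - 1)
  have hb := sq_sqrt (by linarith : 0 ≤ y)
  have hab : √(y - 1) ≤ √y := sqrt_le_sqrt (by linarith)
  have hb1 : 1 ≤ √y := one_le_sqrt.mpr hy
  rw [div_le_iff₀ (by linarith)]
  nlinarith [mul_nonneg (sub_nonneg.2 hab) (mul_nonneg (sub_nonneg.2 hb1) (sqrt_nonneg y)),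
    sqrt_nonneg (y - 1)]

lemma one_div_mul_sqrt_le_two_div_sub {x : ℝ} (hx : 0 < x) :
    1 / ((x + 1) * √(x + 1)) ≤ 2 / √x - 2 / √(x + 1) := by
  have ha := sq_sqrt hx.le
  have hb := sq_sqrt (by linarith : 0 ≤ x + 1)
  have hab : √x ≤ √(x + 1) := sqrt_le_sqrt (by linarith)
  have ha0 : 0 < √x := sqrt_pos.2 hx
  have hb0 : 0 < √(x + 1) := sqrt_pos.2 (by linarith)
  -- `√(x + 1) - √x = 1 / (√x + √(x + 1))`
  have hrhs : 2 / √x - 2 / √(x + 1) = 1 / (√x * √(x + 1) * (√x + √(x + 1)) / 2) := by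
    field_simp
    linear_combination hb - ha
  rw [hrhs]
  apply one_div_le_one_div_of_le (by positivity)
  nlinarith [mul_le_mul_of_nonneg_right hab (mul_nonneg ha0.le hb0.le),
    mul_le_mul_of_nonneg_right hab (mul_nonneg hb0.le hb0.le)]

lemma sum_Ico_one_div_sub_le (m : ℕ) : ∑ j ∈ Ico 1 m, 1 / ((m : ℝ) - j) ≤ 2 * √m := by
  calc ∑ j ∈ Ico 1 m, 1 / ((m : ℝ) - j)
      ≤ ∑ j ∈ range m, 1 / ((m : ℝ) - j) := by
        refine sum_le_sum_of_subset_of_nonneg ?_ fun j hj _ => ?_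
        · intro j; simp only [mem_Ico, mem_range]; omega
        · have : (j : ℝ) < m := by exact_mod_cast mem_range.1 hj
          exact one_div_nonneg.2 (by linarith)
    _ ≤ ∑ j ∈ range m, 2 * (√((m : ℝ) - j) - √((m : ℝ) - (j + 1 : ℕ))) := by
        gcongr with j hj
        have : (j : ℝ) + 1 ≤ m := by exact_mod_cast mem_range.1 hj
        rw [Nat.cast_succ, ← sub_sub]
        exact one_div_le_two_mul_sqrt_sub_sqrt (by linarith)
    _ = 2 * √m := by rw [← mul_sum, sum_range_sub' (fun j => √((m : ℝ) - j))]; simp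

lemma sum_Ico_one_div_mul_sqrt_le (n : ℕ) : ∑ j ∈ Ico 1 n, 1 / ((j : ℝ) * √j) ≤ 3 := by
  rw [sum_Ico_eq_sum_range]
  obtain _ | N := n - 1
  · simp
  have hcast (k : ℕ) : ((1 + (k + 1) : ℕ) : ℝ) = (k + 1 : ℝ) + 1 := by push_cast; ring
  have htail : ∑ k ∈ range N, 1 / (((1 + (k + 1) : ℕ) : ℝ) * √((1 + (k + 1) : ℕ) : ℝ)) ≤ 2 := by
    calc _ ≤ ∑ k ∈ range N, (2 / √((k : ℝ) + 1) - 2 / √(((k + 1 : ℕ) : ℝ) + 1)) := by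
          gcongr with k
          rw [hcast, Nat.cast_succ]
          exact one_div_mul_sqrt_le_two_div_sub (by positivity)
      _ = 2 - 2 / √((N : ℝ) + 1) := by
          rw [sum_range_sub' (fun k => 2 / √((k : ℝ) + 1))]; simp
      _ ≤ 2 := sub_le_self _ (by positivity)
  rw [sum_range_succ']
  norm_num at htail ⊢
  linarith

lemma one_div_mul_sqrt_mul_sub_le {j m : ℝ} (hj : 0 < j) (hjm : j < m) :
    1 / (j * √j * (m - j)) ≤ 2 / m * (1 / (j * √j)) + 4 / (m * √m) * (1 / (m - j)) := by
  have hm : 0 < m := hj.trans hjm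
  have hsj : 0 < √j := sqrt_pos.2 hj
  have hsm : 0 < √m := sqrt_pos.2 hm
  rcases le_or_gt (2 * j) m with hsmall | hlarge
  · have hfirst : 1 / (j * √j * (m - j)) ≤ 2 / m * (1 / (j * √j)) := by
      rw [div_mul_div_comm, mul_one, div_le_div_iff₀ (mul_pos (mul_pos hj hsj) (by linarith))
        (by positivity)]
      nlinarith [mul_pos hj hsj]
    have : 0 ≤ 4 / (m * √m) * (1 / (m - j)) := by
      have : 0 < m - j := by linarith
      positivity
    linarith
  · -- for `j > m / 2` we have `m * √m ≤ 4 * (j * √j)`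
    have hsqrt : √m ≤ 2 * √j := by
      rw [show (2 : ℝ) = √4 by rw [show (4 : ℝ) = 2 ^ 2 by norm_num, sqrt_sq (by norm_num)],
        ← sqrt_mul (by norm_num)]
      exact sqrt_le_sqrt (by linarith)
    have hsecond : 1 / (j * √j * (m - j)) ≤ 4 / (m * √m) * (1 / (m - j)) := by
      rw [div_mul_div_comm, mul_one, div_le_div_iff₀ (by nlinarith [mul_pos hj hsj])
        (by nlinarith [mul_pos hm hsm])]
      nlinarith [mul_le_mul hlarge.le hsqrt hsm.le (by linarith), mul_pos hj hsj]
    have : 0 ≤ 2 / m * (1 / (j * √j)) := by positivity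
    linarith

lemma sum_Ico_one_div_mul_sqrt_mul_sub_le (m : ℕ) :
    ∑ j ∈ Ico 1 m, 1 / ((j : ℝ) * √j * (m - j)) ≤ 14 / m := by
  rcases Nat.eq_zero_or_pos m with rfl | hm
  · simp
  have hm' : (0 : ℝ) < m := by exact_mod_cast hm
  calc ∑ j ∈ Ico 1 m, 1 / ((j : ℝ) * √j * (m - j))
      ≤ ∑ j ∈ Ico 1 m, (2 / m * (1 / ((j : ℝ) * √j)) + 4 / (m * √m) * (1 / ((m : ℝ) - j))) := by
        gcongr with j hj
        obtain ⟨h1, h2⟩ := mem_Ico.1 hj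
        exact one_div_mul_sqrt_mul_sub_le (by exact_mod_cast h1) (by exact_mod_cast h2)
    _ = 2 / m * ∑ j ∈ Ico 1 m, 1 / ((j : ℝ) * √j) +
          4 / (m * √m) * ∑ j ∈ Ico 1 m, 1 / ((m : ℝ) - j) := by
        rw [sum_add_distrib, mul_sum, mul_sum]
    _ ≤ 2 / m * 3 + 4 / (m * √m) * (2 * √m) := by
        gcongr
        · exact sum_Ico_one_div_mul_sqrt_le m
        · exact sum_Ico_one_div_sub_le m
    _ = 14 / m := by
        have : 0 < √(m : ℝ) := sqrt_pos.2 hm'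
        field_simp
        ring

lemma mul_cseq_eq_sum (m : ℕ) (hm : 0 < m) :
    (m : ℝ) * cseq m = ∑ i ∈ range m, cseq i / ((m : ℝ) - i) := by
  obtain ⟨n, rfl⟩ := Nat.exists_eq_add_one_of_ne_zero hm.ne'
  rw [cseq, Fin.sum_univ_eq_sum_range (fun i => cseq i / (((n : ℝ) + 1) - i))]
  push_cast
  field_simp

lemma cseq_le_one (m : ℕ) : cseq m ≤ 1 := by
  induction m using Nat.strong_induction_on with
  | _ m ih =>
  rcases Nat.eq_zero_or_pos m with rfl | hm
  · simp [cseq]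
  have hm' : (0 : ℝ) < m := by exact_mod_cast hm
  have hmul : (m : ℝ) * cseq m ≤ m * 1 := by
    rw [mul_cseq_eq_sum m hm, mul_one]
    calc ∑ i ∈ range m, cseq i / ((m : ℝ) - i) ≤ ∑ _i ∈ range m, (1 : ℝ) := by
          refine sum_le_sum fun i hi => ?_
          have : (i : ℝ) + 1 ≤ m := by exact_mod_cast mem_range.1 hi
          exact div_le_one_of_le₀ (by linarith [ih i (mem_range.1 hi)]) (by linarith)
      _ = m := by simp
  exact le_of_mul_le_mul_left hmul hm'

lemma cseq_le_div_sq_of_forall_lt {A : ℝ} (hA : 0 ≤ A) {m : ℕ} (hm : 0 < m)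
    (h : ∀ j ∈ Ico 1 m, cseq j ≤ A / (j * √j)) : cseq m ≤ (1 + 14 * A) / m ^ 2 := by
  have hm' : (0 : ℝ) < m := by exact_mod_cast hm
  have htail : ∑ j ∈ Ico 1 m, cseq j / ((m : ℝ) - j) ≤ A * (14 / m) := by
    calc ∑ j ∈ Ico 1 m, cseq j / ((m : ℝ) - j)
        ≤ ∑ j ∈ Ico 1 m, A * (1 / ((j : ℝ) * √j * (m - j))) := by
          refine sum_le_sum fun j hj => ?_
          have : (j : ℝ) < m := by exact_mod_cast (mem_Ico.1 hj).2
          rw [mul_one_div, ← div_div]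
          exact div_le_div_of_nonneg_right (h j hj) (by linarith)
      _ ≤ A * (14 / m) := by
          rw [← mul_sum]
          exact mul_le_mul_of_nonneg_left (sum_Ico_one_div_mul_sqrt_mul_sub_le m) hA
  have hmul : (m : ℝ) * cseq m ≤ (1 + 14 * A) / m := by
    rw [mul_cseq_eq_sum m hm, sum_range_eq_add_Ico _ hm]
    calc cseq 0 / ((m : ℝ) - (0 : ℕ)) + ∑ j ∈ Ico 1 m, cseq j / ((m : ℝ) - j)
        ≤ 1 / m + A * (14 / m) := by simp only [cseq, Nat.cast_zero, sub_zero]; linarith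
      _ = (1 + 14 * A) / m := by ring
  calc cseq m = (m * cseq m) / m := by field_simp
    _ ≤ (1 + 14 * A) / m / m := by gcongr
    _ = (1 + 14 * A) / m ^ 2 := by ring

lemma cseq_le_div_mul_sqrt (m : ℕ) (hm : 0 < m) : cseq m ≤ 15 ^ 3 / (m * √m) := by
  induction m using Nat.strong_induction_on with
  | _ m ih =>
  have hm' : (0 : ℝ) < m := by exact_mod_cast hm
  have hs := sq_sqrt hm'.le
  have hs0 : 0 < √(m : ℝ) := sqrt_pos.2 hm'
  have hcube : (m : ℝ) * √m = √m ^ 3 := by rw [pow_succ, hs]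
  rw [hcube]
  rcases le_or_gt (√(m : ℝ)) 15 with hsmall | hlarge
  · calc cseq m ≤ 1 := cseq_le_one m
      _ ≤ 15 ^ 3 / √m ^ 3 := (one_le_div (by positivity)).2 (pow_le_pow_left₀ hs0.le hsmall 3)
  · have hquartic : (m : ℝ) ^ 2 = √m ^ 4 := by rw [show 4 = 2 * 2 from rfl, pow_mul, hs]
    calc cseq m ≤ (1 + 14 * 15 ^ 3) / m ^ 2 :=
          cseq_le_div_sq_of_forall_lt (by norm_num) hm fun j hj =>
            ih j (mem_Ico.1 hj).2 (mem_Ico.1 hj).1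
      _ ≤ 15 ^ 3 / √m ^ 3 := by
        rw [hquartic, div_le_div_iff₀ (by positivity) (by positivity)]
        nlinarith [mul_lt_mul_of_pos_left hlarge (pow_pos hs0 3)]

theorem stmt_16 :
    ∃ C : ℝ, 0 < C ∧ ∀ m : ℕ, 1 ≤ m → cseq m ≤ C / (m : ℝ) ^ 2 :=
  ⟨1 + 14 * 15 ^ 3, by norm_num, fun m hm =>
    cseq_le_div_sq_of_forall_lt (by norm_num) hm fun j hj =>
      cseq_le_div_mul_sqrt j (mem_Ico.1 hj).1⟩
end

section
/- Let m ≥ k ≥ 2 and let π ∈ S_m be a nontrivial permutation acting naturally on the set of k-element subsets of {1,…,m}. Then the number of cycles of the induced permutation on k-sets is at least c(k)·m^{1/2} for some constant c(k) > 0 depending only on k. -/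
/-- The number of cycles of a permutation `σ` of a finite type, counting fixed
points as cycles of length 1: the number of fixed points plus the number of
nontrivial cycles. -/
def numCycles {α : Type*} [Fintype α] [DecidableEq α] (σ : Equiv.Perm α) : ℕ :=
  (Fintype.card α - σ.support.card) + Multiset.card σ.cycleType

/-- The permutation of the `k`-element subsets of `Fin m` induced by a
permutation `π` of `Fin m`, acting via `A ↦ {π a : a ∈ A}`. -/
def inducedOnSets (k : ℕ) {m : ℕ} (π : Equiv.Perm (Fin m)) :
    Equiv.Perm {A : Finset (Fin m) // A.card = k} :=
  (π.finsetCongr).subtypeEquiv (fun A => by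
    simp [Equiv.finsetCongr_apply, Finset.card_map])

/-!
Let `N` be the number of cycles of the induced permutation `σ`, `r` the number of cycles of `π`
and `M` the length of a longest cycle of `π`, so that `m ≤ M * r`.

Picking one point in each of `k` distinct cycles of `π` gives `choose r k` k-sets that `σ` cannot
connect, since the set of `π`-cycles met by a k-set is `σ`-invariant; so `choose r k ≤ N`.
The k-subsets of a longest cycle are fixed by `σ ^ M`, so each lies in a `σ`-cycle of length at
most `M`, whence `choose M k ≤ M * N`. Both bounds give `r, M ≤ (k! + k) * N`, hence
`√m ≤ (k! + k) * N`.
-/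

open Equiv Equiv.Perm Finset Function
open scoped Nat

section

variable {α : Type*} [Fintype α] [DecidableEq α]

theorem numCycles_eq_card_quotient (σ : Perm α) :
    numCycles σ = Nat.card (Quotient (SameCycle.setoid σ)) := by
  classical
  set q : α → Quotient (SameCycle.setoid σ) := Quotient.mk _
  have hfix : ∀ {x y}, σ x = x → q x = q y → x = y := fun hx h =>
    (Quotient.exact h).eq_of_left hx
  let cyc : Quotient (SameCycle.setoid σ) → Perm α :=
    Quotient.lift σ.cycleOf fun _ _ h => h.cycleOf_eq
  have hcyc : (σ.support.image q).image cyc = σ.cycleFactorsFinset := by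
    ext c
    simp only [image_image, mem_image]
    constructor
    · rintro ⟨x, hx, rfl⟩
      exact cycleOf_mem_cycleFactorsFinset_iff.mpr hx
    · intro hc
      obtain ⟨a, ha⟩ := (mem_cycleFactorsFinset_iff.mp hc).1.nonempty_support
      exact ⟨a, mem_cycleFactorsFinset_support_le hc ha, (cycle_is_cycleOf ha hc).symm⟩
  have hinj : Set.InjOn cyc (σ.support.image q) := by
    simp only [coe_image, Set.InjOn, Set.mem_image, mem_coe]
    rintro _ ⟨x, hx, rfl⟩ _ ⟨y, hy, rfl⟩ h
    exact Quotient.sound ((sameCycle_iff_cycleOf_eq_of_mem_support hx hy).mpr h)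
  have hdisj : Disjoint (σ.supportᶜ.image q) (σ.support.image q) := by
    simp only [disjoint_left, mem_image, mem_compl, Perm.mem_support, not_not]
    rintro _ ⟨x, hx, rfl⟩ ⟨y, hy, hxy⟩
    exact hy (hfix hx hxy.symm ▸ hx)
  rw [Nat.card_eq_fintype_card, ← Finset.card_univ,
    ← image_univ_of_surjective Quotient.mk_surjective, ← union_compl σ.supportᶜ, compl_compl,
    image_union, card_union_of_disjoint hdisj,
    card_image_of_injOn fun x hx y _ h => hfix (by simpa using hx) h, ← card_image_of_injOn hinj,
    hcyc, numCycles, card_compl, cycleType_def, Multiset.card_map]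
  rfl

theorem numCycles_pos [Nonempty α] (σ : Perm α) : 0 < numCycles σ := by
  have : Nonempty (Quotient (SameCycle.setoid σ)) := Nonempty.map (Quotient.mk _) ‹_›
  rw [numCycles_eq_card_quotient]
  exact Nat.card_pos

theorem card_image_le_numCycles {β : Type*} [DecidableEq β] (σ : Perm α) (f : α → β)
    (hf : ∀ x, f (σ x) = f x) : #(univ.image f) ≤ numCycles σ := by
  classical
  have hconst : ∀ x y, σ.SameCycle x y → f x = f y := by
    intro x _ h
    obtain ⟨n, rfl⟩ := h.exists_nat_pow_eq
    rw [coe_pow]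
    exact (congrFun (iterate_invariant (funext hf) n) x).symm
  let g : Quotient (SameCycle.setoid σ) → β := Quotient.lift f hconst
  calc #(univ.image f) = #((univ.image (Quotient.mk _)).image g) := by
        rw [image_image]; rfl
    _ ≤ Fintype.card (Quotient (SameCycle.setoid σ)) := card_image_le.trans (card_le_univ _)
    _ = numCycles σ := by rw [numCycles_eq_card_quotient, Nat.card_eq_fintype_card]

theorem card_filter_sameCycle_le_minimalPeriod (σ : Perm α) (x : α) :
    #{y | σ.SameCycle x y} ≤ minimalPeriod σ x := by
  have hpos : 0 < minimalPeriod σ x :=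
    minimalPeriod_pos_of_mem_periodicPts (σ.injective.mem_periodicPts x)
  calc #{y | σ.SameCycle x y}
      ≤ #((range (minimalPeriod σ x)).image (σ^[·] x)) := by
        refine card_le_card fun y hy => ?_
        obtain ⟨i, rfl⟩ := (mem_filter.mp hy).2.exists_nat_pow_eq
        rw [coe_pow, ← (isPeriodicPt_minimalPeriod σ x).iterate_mod_apply]
        exact mem_image_of_mem _ (mem_range.mpr (Nat.mod_lt _ hpos))
    _ ≤ minimalPeriod σ x := card_image_le.trans (card_range _).le

theorem card_le_mul_numCycles (σ : Perm α) (s : Finset α) {n : ℕ}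
    (hs : ∀ x ∈ s, minimalPeriod σ x ≤ n) : #s ≤ n * numCycles σ := by
  classical
  set q : α → Quotient (SameCycle.setoid σ) := Quotient.mk _
  calc #s ≤ n * #(s.image q) := card_le_mul_card_image s n ?_
    _ ≤ n * numCycles σ := by
        rw [numCycles_eq_card_quotient, Nat.card_eq_fintype_card]
        exact Nat.mul_le_mul_left n (card_le_univ _)
  simp only [mem_image]
  rintro _ ⟨x, hx, rfl⟩
  calc #{y ∈ s | q y = q x} ≤ #{y | σ.SameCycle x y} :=
        card_le_card fun y hy =>
          mem_filter.mpr ⟨mem_univ y, Quotient.exact (mem_filter.mp hy).2.symm⟩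
    _ ≤ n := (card_filter_sameCycle_le_minimalPeriod σ x).trans (hs x hx)

theorem exists_card_le_minimalPeriod_mul_numCycles [Nonempty α] (σ : Perm α) :
    ∃ x, Fintype.card α ≤ minimalPeriod σ x * numCycles σ := by
  obtain ⟨x, -, hx⟩ := exists_max_image univ (minimalPeriod σ) univ_nonempty
  exact ⟨x, card_le_mul_numCycles σ univ fun y _ => hx y (mem_univ y)⟩

end

theorem exists_finset_card_eq_minimalPeriod {α : Type*} [DecidableEq α] (f : α → α) (x : α) :
    ∃ s : Finset α, #s = minimalPeriod f x ∧
      ∀ y ∈ s, IsPeriodicPt f (minimalPeriod f x) y := by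
  refine ⟨(range (minimalPeriod f x)).image (f^[·] x), ?_, ?_⟩
  · rw [card_image_of_injOn, card_range]
    simpa using iterate_injOn_Iio_minimalPeriod
  · simp only [mem_image]
    rintro _ ⟨i, -, rfl⟩
    exact (isPeriodicPt_minimalPeriod f x).apply_iterate i

section InducedOnSets

variable {m : ℕ} (k : ℕ)

theorem inducedOnSets_apply_val (π : Perm (Fin m)) (A : {A : Finset (Fin m) // #A = k}) :
    (inducedOnSets k π A).val = A.val.map π.toEmbedding :=
  rfl

theorem inducedOnSets_mul (π τ : Perm (Fin m)) :
    inducedOnSets k (π * τ) = inducedOnSets k π * inducedOnSets k τ := by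
  ext A : 2
  simp only [Perm.mul_apply, inducedOnSets_apply_val, map_map]
  rfl

theorem inducedOnSets_pow (π : Perm (Fin m)) (n : ℕ) :
    inducedOnSets k π ^ n = inducedOnSets k (π ^ n) := by
  induction n with
  | zero => ext A : 2; exact map_refl.symm
  | succ n ih => rw [pow_succ, ih, ← inducedOnSets_mul, ← pow_succ]

theorem isPeriodicPt_inducedOnSets {π : Perm (Fin m)} {n : ℕ}
    {A : {A : Finset (Fin m) // #A = k}} (hA : ∀ x ∈ A.val, IsPeriodicPt π n x) :
    IsPeriodicPt (inducedOnSets k π) n A := by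
  rw [IsPeriodicPt, IsFixedPt, ← coe_pow, inducedOnSets_pow, Subtype.ext_iff,
    inducedOnSets_apply_val, map_eq_image]
  refine (image_congr fun x hx => ?_).trans image_id
  show (π ^ n) x = x
  rw [coe_pow]
  exact hA x hx

theorem card_filter_subset_eq_choose (s : Finset (Fin m)) :
    #{A : {A : Finset (Fin m) // #A = k} | A.val ⊆ s} = (#s).choose k := by
  rw [← card_powersetCard]
  refine card_bij (fun A _ => A.val)
    (fun A hA => mem_powersetCard.mpr ⟨(mem_filter.mp hA).2, A.prop⟩)
    (fun _ _ _ _ h => Subtype.ext h) fun t ht => ?_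
  obtain ⟨hts, htk⟩ := mem_powersetCard.mp ht
  exact ⟨⟨t, htk⟩, mem_filter.mpr ⟨mem_univ _, hts⟩, rfl⟩

theorem choose_minimalPeriod_le_mul_numCycles_inducedOnSets (π : Perm (Fin m)) (x : Fin m) :
    (minimalPeriod π x).choose k ≤ minimalPeriod π x * numCycles (inducedOnSets k π) := by
  obtain ⟨s, hcard, hs⟩ := exists_finset_card_eq_minimalPeriod π x
  have hpos : 0 < minimalPeriod π x :=
    minimalPeriod_pos_of_mem_periodicPts (π.injective.mem_periodicPts x)
  rw [← hcard, ← card_filter_subset_eq_choose, hcard]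
  refine card_le_mul_numCycles _ _ fun A hA => IsPeriodicPt.minimalPeriod_le hpos ?_
  exact isPeriodicPt_inducedOnSets k fun y hy => hs y ((mem_filter.mp hA).2 hy)

theorem choose_numCycles_le_numCycles_inducedOnSets (π : Perm (Fin m)) :
    (numCycles π).choose k ≤ numCycles (inducedOnSets k π) := by
  classical
  set q : Fin m → Quotient (SameCycle.setoid π) := Quotient.mk _
  let cycles (A : {A : Finset (Fin m) // #A = k}) := A.val.image q
  have hcycles : ∀ A, cycles (inducedOnSets k π A) = cycles A := by
    intro A
    simp only [cycles, inducedOnSets_apply_val, map_eq_image, image_image]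
    exact image_congr fun x _ => Quotient.sound (sameCycle_apply_left.mpr (SameCycle.refl π x))
  calc (numCycles π).choose k
      = #(powersetCard k (univ : Finset (Quotient (SameCycle.setoid π)))) := by
        rw [card_powersetCard, card_univ, numCycles_eq_card_quotient, Nat.card_eq_fintype_card]
    _ ≤ #(univ.image cycles) := by
        refine card_le_card fun T hT =>
          mem_image.mpr ⟨⟨T.image Quotient.out, ?_⟩, mem_univ _, ?_⟩
        · rw [card_image_of_injective _ Quotient.out_injective, (mem_powersetCard.mp hT).2]
        · simp [cycles, q, image_image, Function.comp_def]
    _ ≤ numCycles (inducedOnSets k π) := card_image_le_numCycles _ cycles hcycles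

end InducedOnSets

theorem add_one_sub_le_factorial_mul_choose (n : ℕ) {k : ℕ} (hk : k ≠ 0) :
    n + 1 - k ≤ k ! * n.choose k := by
  rw [← Nat.descFactorial_eq_factorial_mul_choose]
  exact (Nat.le_self_pow hk _).trans (Nat.pow_sub_le_descFactorial n k)

theorem add_one_sub_le_factorial_mul_of_choose_le_mul {n k N : ℕ} (hk : 2 ≤ k)
    (h : n.choose k ≤ n * N) : n + 1 - k ≤ k ! * N := by
  obtain ⟨j, rfl⟩ : ∃ j, k = j + 1 := ⟨k - 1, by omega⟩
  rcases n with _ | n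
  · simp
  have hchoose : n.choose j ≤ (j + 1) * N := by
    refine Nat.le_of_mul_le_mul_left ?_ n.succ_pos
    calc (n + 1) * n.choose j
        = (n + 1).choose (j + 1) * (j + 1) := Nat.add_one_mul_choose_eq n j
      _ ≤ (n + 1) * N * (j + 1) := Nat.mul_le_mul_right _ h
      _ = (n + 1) * ((j + 1) * N) := by ring
  calc n + 1 + 1 - (j + 1) = n + 1 - j := by omega
    _ ≤ j ! * n.choose j := add_one_sub_le_factorial_mul_choose n (by omega)
    _ ≤ j ! * ((j + 1) * N) := Nat.mul_le_mul_left _ hchoose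
    _ = (j + 1)! * N := by rw [Nat.factorial_succ]; ring

theorem stmt_18 (k : ℕ) (hk : 2 ≤ k) :
    ∃ c : ℝ, 0 < c ∧ ∀ m : ℕ, k ≤ m → ∀ π : Equiv.Perm (Fin m), π ≠ 1 →
      c * Real.sqrt m ≤ (numCycles (inducedOnSets k π) : ℝ) := by
  refine ⟨1 / (k ! + k), by positivity, fun m hkm π _ => ?_⟩
  set N := numCycles (inducedOnSets k π)
  have : Nonempty (Fin m) := ⟨⟨0, by omega⟩⟩
  have : Nonempty {A : Finset (Fin m) // #A = k} := by
    obtain ⟨A, -, hA⟩ := exists_subset_card_eq (s := (univ : Finset (Fin m)))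
      (by simpa using hkm)
    exact ⟨⟨A, hA⟩⟩
  have hN : 0 < N := numCycles_pos _
  have hbound : ∀ n, n + 1 - k ≤ k ! * N → n ≤ (k ! + k) * N := fun n h => by
    have : k ≤ k * N := Nat.le_mul_of_pos_right k hN
    rw [add_mul]
    omega
  have hr : numCycles π ≤ (k ! + k) * N := hbound _ <|
    (add_one_sub_le_factorial_mul_choose _ (by omega)).trans
      (Nat.mul_le_mul_left _ (choose_numCycles_le_numCycles_inducedOnSets k π))
  obtain ⟨x, hx⟩ := exists_card_le_minimalPeriod_mul_numCycles π
  have hx' : minimalPeriod π x ≤ (k ! + k) * N := hbound _ <|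
    add_one_sub_le_factorial_mul_of_choose_le_mul hk
      (choose_minimalPeriod_le_mul_numCycles_inducedOnSets k π x)
  have hm : (m : ℝ) ≤ (((k ! + k) * N : ℕ) : ℝ) ^ 2 := by
    rw [Fintype.card_fin] at hx
    exact_mod_cast hx.trans ((Nat.mul_le_mul hx' hr).trans_eq (sq _).symm)
  rw [one_div_mul_eq_div, div_le_iff₀ (by positivity)]
  calc √(m : ℝ) ≤ ((k ! + k) * N : ℕ) :=
        (Real.sqrt_le_sqrt hm).trans_eq (Real.sqrt_sq (by positivity))
    _ = _ := by push_cast; ring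
end

section
/- Let r ≥ 2 and let g = (π_1,…,π_r; σ) be an element of the wreath product S_m ≀ S_r acting on {1,…,m}^r by g·(x_1,…,x_r) = (π_1 x_{σ^{-1}(1)},…,π_r x_{σ^{-1}(r)}). If σ ≠ 1, then g has at least m/r cycles in its action on {1,…,m}^r. -/
/-- The element `(π 1, …, π r; σ)` of the wreath product `S_m ≀ S_r` acting on
`(Fin m) ^ r` by `(g • x) i = π i (x (σ⁻¹ i))`. -/
def wreathPerm {m r : ℕ} (π : Fin r → Equiv.Perm (Fin m)) (σ : Equiv.Perm (Fin r)) :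
    Equiv.Perm (Fin r → Fin m) where
  toFun := fun x i => π i (x (σ⁻¹ i))
  invFun := fun x i => (π (σ i))⁻¹ (x (σ i))
  left_inv := by intro x; funext i; simp
  right_inv := by intro x; funext i; simp

/-!
Pick `i` moved by `σ` and let `ℓ ≤ r` be the length of its `σ`-cycle. Then `g ^ ℓ` acts on the
coordinate `i` through a single permutation `τ` of `Fin m`, and since `g` commutes with `g ^ ℓ`,
the surjection `x ↦ ((g x) i, x i)` intertwines `g ^ ℓ` with `τ × τ`. The points `(c, a)`, where
`c` is a chosen representative of the `τ`-cycle of `a`, lie in `m` distinct cycles of `τ × τ`, and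
every cycle of `g` splits into at most `ℓ` cycles of `g ^ ℓ`. Hence
`m ≤ #cycles (τ × τ) ≤ #cycles (g ^ ℓ) ≤ ℓ · #cycles g ≤ r · #cycles g`.
-/

namespace Equiv.Perm

variable {α β : Type*}

section CycleTag

variable [Fintype α] [DecidableEq α]

def cycleTag (g : Perm α) (x : α) : α ⊕ Perm α :=
  if g x = x then .inl x else .inr (g.cycleOf x)

theorem cycleTag_eq_cycleTag_iff {g : Perm α} {x y : α} :
    g.cycleTag x = g.cycleTag y ↔ g.SameCycle x y := by
  constructor
  · intro h
    simp only [cycleTag] at h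
    split_ifs at h with hx hy hy
    · exact (Sum.inl.inj h) ▸ SameCycle.refl g x
    · have hy' : y ∈ (g.cycleOf x).support := by
        rw [Sum.inr.inj h, mem_support_cycleOf_iff]
        exact ⟨SameCycle.refl g y, mem_support.2 hy⟩
      exact (mem_support_cycleOf_iff.1 hy').1
  · intro h
    by_cases hx : g x = x
    · simp only [cycleTag, if_pos (h.apply_eq_self_iff.1 hx), h.eq_of_left hx]
    · simp only [cycleTag, if_neg hx, if_neg (mt h.apply_eq_self_iff.2 hx), h.cycleOf_eq]

theorem cycleTag_mem (g : Perm α) (x : α) :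
    g.cycleTag x ∈ g.supportᶜ.image Sum.inl ∪ g.cycleFactorsFinset.image Sum.inr := by
  by_cases hx : g x = x
  · exact Finset.mem_union_left _ (Finset.mem_image.2 ⟨x, by simpa, by simp [cycleTag, hx]⟩)
  · exact Finset.mem_union_right _ (Finset.mem_image.2
      ⟨g.cycleOf x, cycleOf_mem_cycleFactorsFinset_iff.2 (mem_support.2 hx),
        by simp [cycleTag, hx]⟩)

theorem card_quotient_sameCycle_le_numCycles (g : Perm α) :
    Nat.card (Quotient (SameCycle.setoid g)) ≤ numCycles g := by
  let S := g.supportᶜ.image Sum.inl ∪ g.cycleFactorsFinset.image Sum.inr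
  let tag : Quotient (SameCycle.setoid g) → S :=
    Quotient.lift (fun x => ⟨g.cycleTag x, g.cycleTag_mem x⟩) fun _ _ h =>
      Subtype.ext (cycleTag_eq_cycleTag_iff.2 h)
  have tag_injective : Function.Injective tag := by
    rintro ⟨x⟩ ⟨y⟩ h
    exact Quotient.sound (cycleTag_eq_cycleTag_iff.1 (congrArg Subtype.val h))
  calc Nat.card (Quotient (SameCycle.setoid g)) ≤ Nat.card S :=
        Nat.card_le_card_of_injective tag tag_injective
    _ = S.card := Nat.card_eq_finsetCard S
    _ ≤ (g.supportᶜ.image Sum.inl).card + (g.cycleFactorsFinset.image Sum.inr).card :=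
        Finset.card_union_le _ _
    _ ≤ g.supportᶜ.card + g.cycleFactorsFinset.card :=
        add_le_add Finset.card_image_le Finset.card_image_le
    _ = numCycles g := by
        rw [numCycles, Finset.card_compl, cycleType_def, Multiset.card_map]
        rfl

end CycleTag

theorem card_quotient_sameCycle_le_of_semiconj [Finite α] {g : Perm α} {h : Perm β} {f : α → β}
    (hf : Function.Surjective f) (hfg : Function.Semiconj f g h) :
    Nat.card (Quotient (SameCycle.setoid h)) ≤ Nat.card (Quotient (SameCycle.setoid g)) := by
  have hmap : ∀ x y, g.SameCycle x y → h.SameCycle (f x) (f y) := by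
    intro x y hxy
    obtain ⟨n, rfl⟩ := hxy.exists_nat_pow_eq
    exact ⟨n, by rw [zpow_natCast, coe_pow, coe_pow, (hfg.iterate_right n) x]⟩
  refine Nat.card_le_card_of_surjective (Quotient.map f hmap) ?_
  rintro ⟨y⟩
  obtain ⟨x, rfl⟩ := hf y
  exact ⟨⟦x⟧, rfl⟩

theorem card_quotient_sameCycle_pow_le [Finite α] (g : Perm α) {n : ℕ} (hn : 0 < n) :
    Nat.card (Quotient (SameCycle.setoid (g ^ n))) ≤
      n * Nat.card (Quotient (SameCycle.setoid g)) := by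
  let split : Quotient (SameCycle.setoid g) × Fin n → Quotient (SameCycle.setoid (g ^ n)) :=
    fun p => Quotient.mk _ ((g ^ (p.2 : ℕ)) p.1.out)
  have split_surjective : Function.Surjective split := by
    rintro ⟨y⟩
    obtain ⟨t, ht⟩ := (Quotient.mk_out (s := SameCycle.setoid g) y).exists_nat_pow_eq
    refine ⟨(⟦y⟧, ⟨t % n, Nat.mod_lt t hn⟩), Quotient.sound ⟨(t / n : ℕ), ?_⟩⟩
    rw [zpow_natCast, ← mul_apply, ← pow_mul, ← pow_add, Nat.div_add_mod, ht]
  calc _ ≤ Nat.card (Quotient (SameCycle.setoid g) × Fin n) :=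
        Nat.card_le_card_of_surjective split split_surjective
    _ = _ := by rw [Nat.card_prod, Nat.card_fin, mul_comm]

theorem card_le_card_quotient_sameCycle_prodCongr_self [Finite α] (τ : Perm α) :
    Nat.card α ≤ Nat.card (Quotient (SameCycle.setoid (τ.prodCongr τ))) := by
  let rep : α → α := fun a => (Quotient.mk (SameCycle.setoid τ) a).out
  have rep_sameCycle : ∀ a, τ.SameCycle (rep a) a :=
    Quotient.mk_out (s := SameCycle.setoid τ)
  refine Nat.card_le_card_of_injective (fun a => ⟦(rep a, a)⟧) fun a b hab => ?_
  obtain ⟨t, ht⟩ := (Quotient.exact hab).exists_nat_pow_eq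
  rw [coe_pow, prodCongr_apply, Prod.map_iterate, Prod.map_apply, Prod.mk.injEq,
    ← coe_pow] at ht
  obtain ⟨hrep, rfl⟩ := ht
  have hrep_eq : rep ((τ ^ t) a) = rep a :=
    congrArg Quotient.out (Quotient.sound (s := SameCycle.setoid τ) ⟨-t, by simp⟩)
  -- `τ ^ t` fixes `rep a`, hence every point of its cycle, which contains `a`.
  obtain ⟨u, hu⟩ := (rep_sameCycle a).exists_nat_pow_eq
  rw [hrep_eq] at hrep
  rw [← hu, ← mul_apply, pow_mul_comm, mul_apply, hrep]

end Equiv.Perm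

theorem wreathPerm_mul {m r : ℕ} (π π' : Fin r → Equiv.Perm (Fin m)) (σ σ' : Equiv.Perm (Fin r)) :
    wreathPerm π σ * wreathPerm π' σ' = wreathPerm (fun i => π i * π' (σ⁻¹ i)) (σ * σ') := by
  ext x i
  simp [wreathPerm, mul_inv_rev]

theorem exists_wreathPerm_pow {m r : ℕ} (π : Fin r → Equiv.Perm (Fin m))
    (σ : Equiv.Perm (Fin r)) (n : ℕ) :
    ∃ π' : Fin r → Equiv.Perm (Fin m), wreathPerm π σ ^ n = wreathPerm π' (σ ^ n) := by
  induction n with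
  | zero => exact ⟨1, by ext; simp [wreathPerm]⟩
  | succ n ih =>
    obtain ⟨π', hπ'⟩ := ih
    exact ⟨_, by rw [pow_succ, hπ', wreathPerm_mul, pow_succ]⟩

theorem exists_wreathPerm_pow_apply_eq {m r n : ℕ} (π : Fin r → Equiv.Perm (Fin m))
    {σ : Equiv.Perm (Fin r)} {i : Fin r} (hi : (σ ^ n) i = i) :
    ∃ τ : Equiv.Perm (Fin m), ∀ x, (wreathPerm π σ ^ n) x i = τ (x i) := by
  obtain ⟨π', hπ'⟩ := exists_wreathPerm_pow π σ n
  refine ⟨π' i, fun x => ?_⟩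
  rw [hπ']
  show π' i (x ((σ ^ n)⁻¹ i)) = π' i (x i)
  rw [Equiv.Perm.inv_eq_iff_eq.2 hi.symm]

theorem wreathPerm_apply_prod_surjective {m r : ℕ} (π : Fin r → Equiv.Perm (Fin m))
    {σ : Equiv.Perm (Fin r)} {i : Fin r} (hi : σ i ≠ i) :
    Function.Surjective fun x => (wreathPerm π σ x i, x i) := by
  have hi' : σ⁻¹ i ≠ i := by
    intro h
    apply hi
    nth_rewrite 1 [← h]
    exact σ.apply_symm_apply i
  rintro ⟨a, b⟩
  refine ⟨Function.update (fun _ => b) (σ⁻¹ i) ((π i)⁻¹ a), Prod.ext ?_ ?_⟩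
  · show π i (Function.update (fun _ => b) (σ⁻¹ i) ((π i)⁻¹ a) (σ⁻¹ i)) = a
    rw [Function.update_self]
    exact (π i).apply_symm_apply a
  · exact Function.update_of_ne hi'.symm ((π i)⁻¹ a) (fun _ => b)

open Equiv Perm

theorem stmt_19_general (m r : ℕ) (π : Fin r → Equiv.Perm (Fin m))
    (σ : Equiv.Perm (Fin r)) (hσ : σ ≠ 1) :
    (m : ℝ) / r ≤ (numCycles (wreathPerm π σ) : ℝ) := by
  obtain ⟨i, hi⟩ : ∃ i, σ i ≠ i := by simpa [Equiv.ext_iff] using hσ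
  set ℓ := (σ.cycleOf i).support.card
  have hℓ : 0 < ℓ :=
    Finset.card_pos.2 ⟨i, mem_support_cycleOf_iff.2 ⟨.refl _ _, mem_support.2 hi⟩⟩
  have hσℓ : (σ ^ ℓ) i = i := by
    rw [← pow_mod_card_support_cycleOf_self_apply, Nat.mod_self, pow_zero, one_apply]
  obtain ⟨τ, hτ⟩ := exists_wreathPerm_pow_apply_eq π hσℓ
  set G := wreathPerm π σ
  have hsemiconj : Function.Semiconj (fun x => (G x i, x i)) ⇑(G ^ ℓ) ⇑(τ.prodCongr τ) := by
    intro x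
    show (G ((G ^ ℓ) x) i, (G ^ ℓ) x i) = (τ (G x i), τ (x i))
    rw [← mul_apply, ← pow_succ', pow_succ, mul_apply, hτ, hτ]
  have hm : m ≤ ℓ * numCycles G := calc
    m = Nat.card (Fin m) := (Nat.card_fin m).symm
    _ ≤ Nat.card (Quotient (SameCycle.setoid (τ.prodCongr τ))) :=
      card_le_card_quotient_sameCycle_prodCongr_self τ
    _ ≤ Nat.card (Quotient (SameCycle.setoid (G ^ ℓ))) :=
      card_quotient_sameCycle_le_of_semiconj (wreathPerm_apply_prod_surjective π hi) hsemiconj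
    _ ≤ ℓ * Nat.card (Quotient (SameCycle.setoid G)) := card_quotient_sameCycle_pow_le G hℓ
    _ ≤ ℓ * numCycles G := Nat.mul_le_mul_left ℓ (card_quotient_sameCycle_le_numCycles G)
  have hℓr : ℓ ≤ r := (Finset.card_le_univ _).trans_eq (Fintype.card_fin r)
  refine div_le_of_le_mul₀ (Nat.cast_nonneg r) (Nat.cast_nonneg _) ?_
  rw [mul_comm]
  exact_mod_cast hm.trans (Nat.mul_le_mul_right _ hℓr)

theorem stmt_19 (m r : ℕ) (hr : 2 ≤ r) (π : Fin r → Equiv.Perm (Fin m))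
    (σ : Equiv.Perm (Fin r)) (hσ : σ ≠ 1) :
    (m : ℝ) / r ≤ (numCycles (wreathPerm π σ) : ℝ) :=
  stmt_19_general m r π σ hσ
end
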